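/- arXiv:2010.11516 — 5 statements merged into one kernel-verified Lean document; each statement's English description precedes it below -/
import Mathlib

section
/- Let M be a finitely generated graded S-module with a minimal system of homogeneous generators f_1,...,f_m, let F = ⊕_{i=1}^m S e_i with the S-module homomorphism φ: F → M sending e_i to f_i, and let C = Ker(φ). Fix a monomial order < on S and order F by u e_i < v e_j if i < j, or i = j and u < v. Then the initial module of C decomposes as in_<(C) = ⊕_{j=1}^m in_<(I_j) e_j, where I_j = (f_1,...,f_{j-1}) : f_j. -/
open MvPolynomial Finsupp

namespace Paper

variable (K : Type) [Field K] (n : ℕ)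

/-- The polynomial ring `S = K[x_1,…,x_n]`. -/
abbrev S := MvPolynomial (Fin n) K

/-- An ideal of `S` is generated by linear forms. -/
def GenByLinearForms (I : Ideal (S K n)) : Prop :=
  ∃ L : Set (S K n), (∀ f ∈ L, f ∈ homogeneousSubmodule (Fin n) K 1) ∧ I = Ideal.span L

variable {M : Type} [AddCommGroup M] [Module (S K n) M]

/-- `M` has linear quotients with respect to the system of generators `f`. -/
def HasLinearQuotientsWith {s : ℕ} (f : Fin s → M) : Prop :=
  (Submodule.span (S K n) (Set.range f) = ⊤) ∧
  ∀ j : Fin s,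
    ((Submodule.span (S K n) (f '' {i | i < j})).colon (Submodule.span (S K n) {f j}) = ⊤ ∨
      GenByLinearForms K n
        ((Submodule.span (S K n) (f '' {i | i < j})).colon (Submodule.span (S K n) {f j})))

/-- A minimal system of generators. -/
def IsMinimalGenSys {s : ℕ} (f : Fin s → M) : Prop :=
  Submodule.span (S K n) (Set.range f) = ⊤ ∧
  ∀ j, f j ∉ Submodule.span (S K n) (f '' {i | i ≠ j})

/-- The degree `t` component of the graded free module `⊕ S(-a i)`. -/
def freeComp {r : ℕ} (a : Fin r → ℕ) (t : ℕ) :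
    Submodule K (Fin r →₀ S K n) where
  carrier := {v | ∀ i, v i ∈ homogeneousSubmodule (Fin n) K (t - a i) ∧ (t < a i → v i = 0)}
  add_mem' := by
    intro v w hv hw i
    refine ⟨Submodule.add_mem _ (hv i).1 (hw i).1, fun h => ?_⟩
    simp [Finsupp.add_apply, (hv i).2 h, (hw i).2 h]
  zero_mem' := by
    intro i
    simp
  smul_mem' := by
    intro c v hv i
    refine ⟨Submodule.smul_mem _ c (hv i).1, fun h => ?_⟩
    simp [Finsupp.smul_apply, (hv i).2 h]

variable [Module K M] [IsScalarTower K (S K n) M]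

/-- A graded free resolution of the graded module `M` with graded pieces `ℳ`. -/
structure GradedFreeResolution (ℳ : ℕ → Submodule K M) where
  rk : ℕ → ℕ
  deg : (i : ℕ) → Fin (rk i) → ℕ
  d : (i : ℕ) → ((Fin (rk (i+1)) →₀ S K n) →ₗ[S K n] (Fin (rk i) →₀ S K n))
  aug : (Fin (rk 0) →₀ S K n) →ₗ[S K n] M
  aug_surj : Function.Surjective aug
  exact_aug : Function.Exact (d 0) aug
  exact : ∀ i, Function.Exact (d (i+1)) (d i)
  aug_graded : ∀ t, ∀ v ∈ freeComp K n (deg 0) t, aug v ∈ ℳ t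
  d_graded : ∀ i t, ∀ v ∈ freeComp K n (deg (i+1)) t, d i v ∈ freeComp K n (deg i) t

/-- `M` (with grading `ℳ`) has a `d₀`-linear resolution. -/
def HasLinearResolution (ℳ : ℕ → Submodule K M) (d₀ : ℕ) : Prop :=
  ∃ R : GradedFreeResolution K n ℳ, ∀ i k, R.deg i k = d₀ + i

/-- The submodule of `M` generated by the homogeneous elements of degree `j`. -/
noncomputable def degreeSubmodule (ℳ : ℕ → Submodule K M) (j : ℕ) : Submodule (S K n) M :=
  Submodule.span (S K n) (ℳ j : Set M)

/-- The grading induced on a submodule. -/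
noncomputable def subGrading (ℳ : ℕ → Submodule K M) (N : Submodule (S K n) M) : ℕ → Submodule K N :=
  fun t => (ℳ t).comap ((N.subtype).restrictScalars K)

/-- `M` is componentwise linear. -/
def ComponentwiseLinear (ℳ : ℕ → Submodule K M) : Prop :=
  ∀ j : ℕ, HasLinearResolution K n (subGrading K n ℳ (degreeSubmodule K n ℳ j)) j

/-- `ℳ` is a grading of the `S`-module `M`. -/
structure IsGrading (ℳ : ℕ → Submodule K M) : Prop where
  internal : DirectSum.IsInternal (fun i => ℳ i)
  smul_mem : ∀ i j : ℕ, ∀ p ∈ homogeneousSubmodule (Fin n) K i, ∀ x ∈ ℳ j, p • x ∈ ℳ (i + j)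

/-- The graded maximal ideal of `S`. -/
noncomputable def maxIdeal : Ideal (S K n) := Ideal.span (Set.range X)

/-- Minimality of a graded free resolution. -/
def IsMinimalRes {ℳ : ℕ → Submodule K M} (R : GradedFreeResolution K n ℳ) : Prop :=
  (∀ i, LinearMap.range (R.d i) ≤ (maxIdeal K n) • (⊤ : Submodule (S K n) (Fin (R.rk i) →₀ S K n))) ∧
  (LinearMap.ker R.aug ≤ (maxIdeal K n) • (⊤ : Submodule (S K n) (Fin (R.rk 0) →₀ S K n)))

/-- The graded Betti numbers read off from a resolution. -/
def betti {ℳ : ℕ → Submodule K M} (R : GradedFreeResolution K n ℳ) (i j : ℕ) : ℕ :=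
  (Finset.univ.filter (fun k => R.deg i k = j)).card

/-- `g` is an `M`-regular sequence of elements of the graded maximal ideal. -/
def IsRegularSeq {t : ℕ} (g : Fin t → S K n) : Prop :=
  (∀ i, g i ∈ maxIdeal K n) ∧
  (∀ i : Fin t, ∀ x : M,
      g i • x ∈ (Ideal.span (g '' {i' | i' < i})) • (⊤ : Submodule (S K n) M) →
        x ∈ (Ideal.span (g '' {i' | i' < i})) • (⊤ : Submodule (S K n) M)) ∧
  (Ideal.span (Set.range g)) • (⊤ : Submodule (S K n) M) ≠ ⊤

/-- The depth of `M` over `S`. -/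
noncomputable def depth : ℕ∞ :=
  sSup ((fun t : ℕ => (t : ℕ∞)) ''
    {t : ℕ | ∃ g : Fin t → S K n, IsRegularSeq K n (M := M) g})

end Paper

section MonOrd

open MvPolynomial

variable {K : Type} [Field K] {σ : Type*}

/-- The leading exponent of a polynomial with respect to a monomial order. -/
noncomputable def leadExp (m : MonomialOrder σ) (p : MvPolynomial σ K) : σ →₀ ℕ :=
  m.toSyn.symm (p.support.sup (fun c => m.toSyn c))

/-- The initial ideal of `J` with respect to a monomial order. -/
noncomputable def inIdeal (m : MonomialOrder σ) (J : Ideal (MvPolynomial σ K)) :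
    Ideal (MvPolynomial σ K) :=
  Ideal.span ((fun p => monomial (leadExp m p) (1 : K)) '' {p | p ∈ J ∧ p ≠ 0})

variable {A B : Type*}

/-- The restriction of an exponent vector to the first block of variables. -/
noncomputable def xPart (c : (A ⊕ B) →₀ ℕ) : A →₀ ℕ :=
  Finsupp.comapDomain Sum.inl c Sum.inl_injective.injOn

/-- The restriction of an exponent vector to the second block of variables. -/
noncomputable def yPart (c : (A ⊕ B) →₀ ℕ) : B →₀ ℕ :=
  Finsupp.comapDomain Sum.inr c Sum.inr_injective.injOn

/-- `ord` compares the `y`-part first (via `ordY`) and breaks ties using the `x`-part. -/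
def ComparesYFirst (ord : MonomialOrder (A ⊕ B)) (ordY : MonomialOrder B)
    (ordX : MonomialOrder A) : Prop :=
  ∀ c d : (A ⊕ B) →₀ ℕ,
    ord.toSyn c < ord.toSyn d ↔
      (ordY.toSyn (yPart c) < ordY.toSyn (yPart d) ∨
        (yPart c = yPart d ∧ ordX.toSyn (xPart c) < ordX.toSyn (xPart d)))

/-- The x-condition: the initial ideal of `J` is generated by monomials involving
at most one `x`-variable, with exponent at most 1. -/
def XCondition [Fintype A] (ord : MonomialOrder (A ⊕ B)) (J : Ideal (MvPolynomial (A ⊕ B) K)) :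
    Prop :=
  ∃ D : Set ((A ⊕ B) →₀ ℕ), (∀ c ∈ D, (∑ i : A, c (Sum.inl i)) ≤ 1) ∧
    inIdeal ord J = Ideal.span ((fun c => monomial c (1 : K)) '' D)

/-- Lexicographic comparison of exponent vectors, where `prio j i` means that variable `j`
has strictly higher priority than `i`. -/
def lexLt (prio : A → A → Prop) (a b : A →₀ ℕ) : Prop :=
  ∃ i, a i < b i ∧ ∀ j, prio j i → a j = b j

end MonOrd

namespace Paper

open Finsupp

section Colon

variable {R M ι : Type*} [CommRing R] [AddCommGroup M] [Module R M] [LinearOrder ι]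
  {f : ι → M} {j : ι}

theorem apply_mem_colon_of_mem_ker {v : ι →₀ R} (hv : v ∈ LinearMap.ker (linearCombination R f))
    (htop : ∀ j', j < j' → v j' = 0) :
    v j ∈ (Submodule.span R (f '' {i | i < j})).colon (Submodule.span R {f j}) := by
  have hlow : v - single j (v j) ∈ supported R R {i | i < j} := by
    intro i hi
    by_contra hij
    rcases (not_lt.1 hij).eq_or_lt with rfl | hji
    · simp at hi
    · simp [htop i hji, hji.ne'] at hi
  have hvj : v j • f j = -linearCombination R f (v - single j (v j)) := by
    simp [LinearMap.mem_ker.1 hv]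
  rw [Submodule.mem_colon_span_singleton, hvj]
  exact neg_mem ((mem_span_image_iff_linearCombination R).2 ⟨_, hlow, rfl⟩)

theorem exists_mem_ker_apply_eq_of_mem_colon {g : R}
    (hg : g ∈ (Submodule.span R (f '' {i | i < j})).colon (Submodule.span R {f j})) :
    ∃ v ∈ LinearMap.ker (linearCombination R f), v j = g ∧ ∀ j', j < j' → v j' = 0 := by
  obtain ⟨l, hl, hlc⟩ := (mem_span_image_iff_linearCombination R).1
    (Submodule.mem_colon_span_singleton.1 hg)
  have hl_ge : ∀ i, j ≤ i → l i = 0 := fun i hji =>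
    notMem_support_iff.1 fun hi => (not_lt.2 hji) (hl hi)
  refine ⟨single j g - l, by simp [hlc], by simp [hl_ge j le_rfl], fun j' hjj' => ?_⟩
  simp [hl_ge j' hjj'.le, hjj'.ne']

end Colon

theorem statement3_general (K : Type) [Field K] (n : ℕ)
    (M : Type) [AddCommGroup M] [Module (S K n) M]
    (m : ℕ) (f : Fin m → M)
    (ord : MonomialOrder (Fin n))
    (φ : (Fin m →₀ S K n) →ₗ[S K n] M)
    (hφ : φ = Finsupp.linearCombination (S K n) f)
    (C : Submodule (S K n) (Fin m →₀ S K n))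
    (hC : C = LinearMap.ker φ) :
    -- `in_<(C) = ⊕_{j=1}^m in_<(I_j) e_j`
    Submodule.span (S K n)
      {w : Fin m →₀ S K n | ∃ v ∈ C, v ≠ 0 ∧ ∃ j : Fin m, v j ≠ 0 ∧ (∀ j', j < j' → v j' = 0) ∧
        w = Finsupp.single j (monomial (leadExp ord (v j)) (1 : K))} =
    Submodule.span (S K n)
      {w : Fin m →₀ S K n | ∃ (j : Fin m) (g : S K n),
        g ∈ (Submodule.span (S K n) (f '' {i | i < j})).colon
              (Submodule.span (S K n) {f j}) ∧ g ≠ 0 ∧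
        w = Finsupp.single j (monomial (leadExp ord g) (1 : K))} := by
  subst hC hφ
  congr 1
  ext w
  constructor
  · rintro ⟨v, hv, -, j, hvj, htop, rfl⟩
    exact ⟨j, v j, apply_mem_colon_of_mem_ker hv htop, hvj, rfl⟩
  · rintro ⟨j, g, hg, hg0, rfl⟩
    obtain ⟨v, hv, rfl, htop⟩ := exists_mem_ker_apply_eq_of_mem_colon hg
    exact ⟨v, hv, fun h => hg0 (by simp [h]), j, hg0, htop, rfl⟩

/-- With the position-over-term order on `F = ⊕ S e_j` (with `e_1 < … < e_m`),
the initial module of the syzygy module `C = ker φ` decomposes as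
`in(C) = ⊕_j in(I_j) e_j` where `I_j = (f_1,…,f_{j-1}) : f_j`. -/
theorem statement3 (K : Type) [Field K] (n : ℕ)
    (M : Type) [AddCommGroup M] [Module (S K n) M] [Module K M] [IsScalarTower K (S K n) M]
    (ℳ : ℕ → Submodule K M) (hgr : IsGrading K n ℳ)
    (hfin : Module.Finite (S K n) M)
    (m : ℕ) (f : Fin m → M) (df : Fin m → ℕ)
    (hhom : ∀ j, f j ∈ ℳ (df j))
    (hmin : IsMinimalGenSys K n f)
    (ord : MonomialOrder (Fin n))
    (φ : (Fin m →₀ S K n) →ₗ[S K n] M)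
    (hφ : φ = Finsupp.linearCombination (S K n) f)
    (C : Submodule (S K n) (Fin m →₀ S K n))
    (hC : C = LinearMap.ker φ) :
    -- `in_<(C) = ⊕_{j=1}^m in_<(I_j) e_j`
    Submodule.span (S K n)
      {w : Fin m →₀ S K n | ∃ v ∈ C, v ≠ 0 ∧ ∃ j : Fin m, v j ≠ 0 ∧ (∀ j', j < j' → v j' = 0) ∧
        w = Finsupp.single j (monomial (leadExp ord (v j)) (1 : K))} =
    Submodule.span (S K n)
      {w : Fin m →₀ S K n | ∃ (j : Fin m) (g : S K n),
        g ∈ (Submodule.span (S K n) (f '' {i | i < j})).colon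
              (Submodule.span (S K n) {f j}) ∧ g ≠ 0 ∧
        w = Finsupp.single j (monomial (leadExp ord g) (1 : K))} :=
  statement3_general K n M m f ord φ hφ C hC

end Paper
end

section
/- Let M be a finitely generated graded S-module with a minimal system of homogeneous generators f_1,...,f_m, φ: F = ⊕ S e_i → M with φ(e_i) = f_i and C = Ker(φ), and order F as above. If every generator of the initial module in_<(C) has the form u e_i with deg u ≤ 1, then M has linear quotients (in fact each colon ideal (f_1,...,f_{j-1}) : f_j which is a proper ideal is generated by linear forms). -/
open MvPolynomial Finsupp

/-!
Because `F` is ordered by position first, the initial term of a syzygy whose last nonzero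
coordinate is `v_j` is `in(v_j) e_j`, and these `j`-th coordinates are exactly the elements of
the colon ideal `I_j = (f_1, …, f_{j-1}) : f_j`. Hence `in(C) = ⊕ in(I_j) e_j`, and the hypothesis
says that each `in(I_j)` is generated by monomials of degree at most one. Minimality keeps units
out of `I_j`, so these generators are variables. As `I_j` is a homogeneous ideal, the linear parts
of elements of `I_j` with such initial monomials are linear forms of `I_j` with the same initial
monomials, and linear forms of `I_j` whose initial monomials generate `in(I_j)` generate `I_j`.
-/

section MonomialOrder

variable {σ : Type*} (m : MonomialOrder σ)

-- `leadExp m p` is `m.degree p` by definition, so the lemmas are stated with Mathlib's name.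

theorem MonomialOrder.degree_homogeneousComponent_degree {R : Type*} [CommSemiring R]
    (p : MvPolynomial σ R) :
    m.degree (homogeneousComponent (m.degree p).degree p) = m.degree p := by
  rcases eq_or_ne p 0 with rfl | hp
  · simp
  have hsupp : (homogeneousComponent (m.degree p).degree p).support ⊆ p.support := by
    intro c hc
    rw [MvPolynomial.mem_support_iff, coeff_homogeneousComponent] at hc
    exact MvPolynomial.mem_support_iff.mpr (by split_ifs at hc <;> simp_all)
  have hmem : m.degree p ∈ (homogeneousComponent (m.degree p).degree p).support := by
    rw [MvPolynomial.mem_support_iff, coeff_homogeneousComponent, if_pos rfl]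
    exact m.coeff_degree_ne_zero_iff.mpr hp
  apply m.toSyn.injective
  refine le_antisymm ?_ (m.le_degree hmem)
  exact m.degree_le_iff.mpr fun c hc => m.le_degree (hsupp hc)

variable {K : Type} [Field K]

theorem MonomialOrder.isUnit_of_degree_eq_zero {p : MvPolynomial σ K} (hp : p ≠ 0)
    (h : m.degree p = 0) : IsUnit p := by
  rw [m.eq_C_of_degree_eq_zero h]
  exact (isUnit_iff_ne_zero.mpr (m.leadingCoeff_ne_zero_iff.mpr hp)).map C

/-- A Gröbner basis of `I` generates `I`. -/
theorem Ideal.eq_span_of_forall_exists_degree_le {I : Ideal (MvPolynomial σ K)}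
    {L : Set (MvPolynomial σ K)} (hL : L ⊆ I)
    (h : ∀ g ∈ I, g ≠ 0 → ∃ ℓ ∈ L, ℓ ≠ 0 ∧ m.degree ℓ ≤ m.degree g) :
    I = Ideal.span L := by
  refine le_antisymm (fun g hg => ?_) (Ideal.span_le.mpr hL)
  obtain ⟨c, r, hgr, -, hr⟩ := m.div_set (B := {ℓ | ℓ ∈ L ∧ ℓ ≠ 0})
    (fun b hb => (m.leadingCoeff_ne_zero_iff.mpr hb.2).isUnit) g
  set q := Finsupp.linearCombination _
    (fun b : {ℓ | ℓ ∈ L ∧ ℓ ≠ 0} => (b : MvPolynomial σ K)) c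
  have hq : q ∈ Ideal.span L :=
    Ideal.sum_mem _ fun b _ => Ideal.mul_mem_left _ _ (Ideal.subset_span b.2.1)
  have hr0 : r = 0 := by
    by_contra hr0
    have hrI : r ∈ I := by
      rw [eq_sub_of_add_eq' hgr.symm]
      exact sub_mem hg (Ideal.span_le.mpr hL hq)
    obtain ⟨ℓ, hℓL, hℓ0, hle⟩ := h r hrI hr0
    exact hr _ (m.degree_mem_support hr0) ℓ ⟨hℓL, hℓ0⟩ hle
  rw [hgr, hr0, add_zero]
  exact hq

theorem inIdeal_eq_span_monomial (J : Ideal (MvPolynomial σ K)) :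
    inIdeal m J =
      Ideal.span ((fun c => monomial c 1) '' (m.degree '' {p | p ∈ J ∧ p ≠ 0})) := by
  rw [Set.image_image]
  rfl

theorem monomial_mem_inIdeal_iff {J : Ideal (MvPolynomial σ K)} {c : σ →₀ ℕ} :
    monomial c 1 ∈ inIdeal m J ↔ ∃ p ∈ J, p ≠ 0 ∧ m.degree p ≤ c := by
  classical
  rw [inIdeal_eq_span_monomial, mem_ideal_span_monomial_image, support_monomial,
    if_neg one_ne_zero]
  simp [and_assoc]

theorem exists_degree_le_of_inIdeal_eq_span {J : Ideal (MvPolynomial σ K)} {E : Set (σ →₀ ℕ)}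
    (hJ : inIdeal m J = Ideal.span ((fun c => monomial c 1) '' E)) {g : MvPolynomial σ K}
    (hg : g ∈ J) (hg0 : g ≠ 0) :
    ∃ c ∈ E, ∃ h ∈ J, h ≠ 0 ∧ m.degree h ≤ c ∧ c ≤ m.degree g := by
  classical
  have hgin : monomial (m.degree g) 1 ∈ inIdeal m J :=
    (monomial_mem_inIdeal_iff m).mpr ⟨g, hg, hg0, le_rfl⟩
  rw [hJ, mem_ideal_span_monomial_image, support_monomial, if_neg one_ne_zero] at hgin
  obtain ⟨c, hc, hcg⟩ := hgin _ (Finset.mem_singleton_self _)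
  have hcin : monomial c 1 ∈ inIdeal m J := hJ ▸ Ideal.subset_span ⟨c, hc, rfl⟩
  obtain ⟨h, hh, hh0, hhc⟩ := (monomial_mem_inIdeal_iff m).mp hcin
  exact ⟨c, hc, h, hh, hh0, hhc, hcg⟩

end MonomialOrder

section Syzygies

variable {R M ι : Type*} [CommRing R] [AddCommGroup M] [Module R M] [LinearOrder ι]

theorem mem_colon_iff_exists_mem_ker (f : ι → M) (j : ι) (g : R) :
    g ∈ (Submodule.span R (f '' {i | i < j})).colon (Submodule.span R {f j}) ↔
      ∃ v ∈ LinearMap.ker (linearCombination R f), v j = g ∧ ∀ i, j < i → v i = 0 := by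
  rw [Submodule.mem_colon_span_singleton, mem_span_image_iff_linearCombination]
  constructor
  · rintro ⟨l, hl, hlg⟩
    have hl' : ∀ i, ¬ i < j → l i = 0 := fun i hi =>
      notMem_support_iff.mp fun h => hi (hl h)
    refine ⟨single j g - l, ?_, ?_, fun i hji => ?_⟩
    · rw [LinearMap.mem_ker, map_sub, linearCombination_single, hlg, sub_self]
    · rw [Finsupp.sub_apply, single_eq_same, hl' j (lt_irrefl j), sub_zero]
    · rw [Finsupp.sub_apply, single_eq_of_ne hji.ne', hl' i hji.not_gt, sub_zero]
  · rintro ⟨v, hv, rfl, hvj⟩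
    refine ⟨-v.erase j, fun i hi => ?_, ?_⟩
    · rw [Finset.mem_coe, Finsupp.mem_support_iff, Finsupp.neg_apply, neg_ne_zero] at hi
      rcases lt_trichotomy i j with h | rfl | h
      · exact h
      · exact absurd erase_same hi
      · exact absurd (by rw [erase_ne h.ne', hvj i h]) hi
    · rw [map_neg, neg_eq_iff_add_eq_zero, ← linearCombination_single, ← map_add,
        erase_add_single]
      exact hv

theorem colon_ne_top_of_notMem_span {f : ι → M} {j : ι}
    (hj : f j ∉ Submodule.span R (f '' {i | i ≠ j})) :
    (Submodule.span R (f '' {i | i < j})).colon (Submodule.span R {f j}) ≠ ⊤ := by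
  intro h
  have h1 : (1 : R) • f j ∈ Submodule.span R (f '' {i | i < j}) :=
    Submodule.mem_colon_span_singleton.mp (h ▸ Submodule.mem_top)
  rw [one_smul] at h1
  exact hj (Submodule.span_mono (Set.image_mono fun i (hi : i < j) => hi.ne) h1)

end Syzygies

section InitialModule

variable {K : Type} [Field K] {σ ι : Type*}

/-- The initial module `in_<(C)` for the order on `ι →₀ K[σ]` that compares positions first:
the initial term of `v` is `in(v_j) e_j` for the largest `j` with `v_j ≠ 0`. -/
noncomputable def initialModule [LinearOrder ι] (ord : MonomialOrder σ)
    (C : Submodule (MvPolynomial σ K) (ι →₀ MvPolynomial σ K)) :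
    Submodule (MvPolynomial σ K) (ι →₀ MvPolynomial σ K) :=
  Submodule.span (MvPolynomial σ K)
    {w | ∃ v ∈ C, v ≠ 0 ∧ ∃ j : ι, v j ≠ 0 ∧ (∀ j', j < j' → v j' = 0) ∧
      w = Finsupp.single j (monomial (leadExp ord (v j)) (1 : K))}

theorem map_lapply_span_single_monomial {R : Type*} [CommSemiring R]
    (D : Set (ι × (σ →₀ ℕ))) (j : ι) :
    (Submodule.span (MvPolynomial σ R)
        ((fun jc => Finsupp.single jc.1 (monomial jc.2 (1 : R))) '' D)).map (lapply j) =
      Ideal.span ((fun c => monomial c 1) '' {c | (j, c) ∈ D}) := by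
  classical
  rw [Submodule.map_span]
  apply le_antisymm
  · rw [Submodule.span_le]
    rintro _ ⟨_, ⟨⟨i, c⟩, hc, rfl⟩, rfl⟩
    rw [lapply_apply, single_apply]
    split_ifs with h
    · subst h
      exact Ideal.subset_span ⟨c, hc, rfl⟩
    · exact zero_mem _
  · rw [Ideal.span, Submodule.span_le]
    rintro _ ⟨c, hc, rfl⟩
    exact Submodule.subset_span ⟨_, ⟨(j, c), hc, rfl⟩, by simp⟩

variable {M : Type*} [AddCommGroup M] [Module (MvPolynomial σ K) M] [LinearOrder ι]

theorem map_lapply_initialModule_ker (ord : MonomialOrder σ) (f : ι → M) (j : ι) :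
    (initialModule ord (LinearMap.ker (linearCombination (MvPolynomial σ K) f))).map
        (lapply j) =
      inIdeal ord ((Submodule.span (MvPolynomial σ K) (f '' {i | i < j})).colon
        (Submodule.span (MvPolynomial σ K) {f j})) := by
  classical
  rw [initialModule, Submodule.map_span]
  apply le_antisymm
  · rw [Submodule.span_le]
    rintro _ ⟨_, ⟨v, hv, -, i, hvi, hvtail, rfl⟩, rfl⟩
    rw [lapply_apply, single_apply]
    split_ifs with h
    · subst h
      exact (monomial_mem_inIdeal_iff ord).mpr
        ⟨v i, (mem_colon_iff_exists_mem_ker f i _).mpr ⟨v, hv, rfl, hvtail⟩, hvi, le_rfl⟩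
    · exact zero_mem _
  · rw [inIdeal, Ideal.span, Submodule.span_le]
    rintro _ ⟨g, ⟨hg, hg0⟩, rfl⟩
    obtain ⟨v, hv, rfl, hvtail⟩ := (mem_colon_iff_exists_mem_ker f j g).mp hg
    exact Submodule.subset_span
      ⟨_, ⟨v, hv, fun h => hg0 (by simp [h]), j, hg0, hvtail, rfl⟩, by simp⟩

end InitialModule

namespace Paper

open DirectSum

variable {K : Type} [Field K] {n : ℕ} {M : Type} [AddCommGroup M] [Module (S K n) M]
  [Module K M] {ℳ : ℕ → Submodule K M} [Decomposition ℳ]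

namespace IsGrading

theorem decompose_homogeneousComponent_smul (hgr : IsGrading K n ℳ) (p : S K n) {x : M}
    {d : ℕ} (hx : x ∈ ℳ d) (k t : ℕ) :
    (decompose ℳ (homogeneousComponent k p • x) t : M) =
      if k + d = t then homogeneousComponent k p • x else 0 := by
  have hmem := hgr.smul_mem k d _ (homogeneousComponent_mem k p) x hx
  split_ifs with h
  · exact decompose_of_mem_same ℳ (h ▸ hmem)
  · exact decompose_of_mem_ne ℳ hmem h

theorem decompose_smul_eq_sum (hgr : IsGrading K n ℳ) (p : S K n) {x : M} {d : ℕ}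
    (hx : x ∈ ℳ d) (t : ℕ) :
    (decompose ℳ (p • x) t : M) = ∑ k ∈ Finset.range (p.totalDegree + 1),
      if k + d = t then homogeneousComponent k p • x else 0 := by
  conv_lhs => rw [← sum_homogeneousComponent p, Finset.sum_smul, decompose_sum,
    DFinsupp.finsetSum_apply, AddSubmonoidClass.coe_finsetSum]
  exact Finset.sum_congr rfl fun k _ => hgr.decompose_homogeneousComponent_smul p hx k t

theorem decompose_smul_mem_span_singleton (hgr : IsGrading K n ℳ) (p : S K n) {x : M}
    {d : ℕ} (hx : x ∈ ℳ d) (t : ℕ) :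
    (decompose ℳ (p • x) t : M) ∈ Submodule.span (S K n) {x} := by
  rw [hgr.decompose_smul_eq_sum p hx]
  refine Submodule.sum_mem _ fun k _ => ?_
  split_ifs
  · exact Submodule.smul_mem _ _ (Submodule.mem_span_singleton_self x)
  · exact zero_mem _

theorem decompose_smul_add (hgr : IsGrading K n ℳ) (p : S K n) {x : M} {d : ℕ}
    (hx : x ∈ ℳ d) (k : ℕ) :
    (decompose ℳ (p • x) (k + d) : M) = homogeneousComponent k p • x := by
  rw [hgr.decompose_smul_eq_sum p hx]
  by_cases hk : k ∈ Finset.range (p.totalDegree + 1)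
  · rw [Finset.sum_eq_single k (fun k' _ hk' => if_neg (by omega)) (absurd hk), if_pos rfl]
  · rw [Finset.sum_eq_zero fun k' hk' => if_neg (by rintro h; exact hk (by simp_all)),
      homogeneousComponent_eq_zero _ _ (by simpa using hk), zero_smul]

theorem decompose_mem_span (hgr : IsGrading K n ℳ) {X : Set M} (hX : ∀ x ∈ X, ∃ d, x ∈ ℳ d)
    {y : M} (hy : y ∈ Submodule.span (S K n) X) (t : ℕ) :
    (decompose ℳ y t : M) ∈ Submodule.span (S K n) X := by
  rw [← Submodule.mem_toAddSubmonoid, Submodule.span_eq_closure] at hy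
  induction hy using AddSubmonoid.closure_induction with
  | mem y hy =>
    obtain ⟨p, -, x, hx, rfl⟩ := Set.mem_smul.mp hy
    obtain ⟨d, hxd⟩ := hX x hx
    exact Submodule.span_mono (Set.singleton_subset_iff.mpr hx)
      (hgr.decompose_smul_mem_span_singleton p hxd t)
  | zero => simp
  | add y z _ _ hy hz => simpa using add_mem hy hz

theorem homogeneousComponent_mem_colon (hgr : IsGrading K n ℳ) {X : Set M}
    (hX : ∀ x ∈ X, ∃ d, x ∈ ℳ d) {x : M} {d : ℕ} (hx : x ∈ ℳ d) {p : S K n}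
    (hp : p ∈ (Submodule.span (S K n) X).colon (Submodule.span (S K n) {x})) (k : ℕ) :
    homogeneousComponent k p ∈
      (Submodule.span (S K n) X).colon (Submodule.span (S K n) {x}) := by
  rw [Submodule.mem_colon_span_singleton] at hp ⊢
  rw [← hgr.decompose_smul_add p hx]
  exact hgr.decompose_mem_span hX hp _

end IsGrading

theorem genByLinearForms_colon (hgr : IsGrading K n ℳ) {m : ℕ} {f : Fin m → M} {df : Fin m → ℕ}
    (hhom : ∀ j, f j ∈ ℳ (df j)) {j : Fin m}
    (hj : f j ∉ Submodule.span (S K n) (f '' {i | i ≠ j})) (ord : MonomialOrder (Fin n))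
    {E : Set (Fin n →₀ ℕ)} (hE : ∀ c ∈ E, c.degree ≤ 1)
    (hin : inIdeal ord ((Submodule.span (S K n) (f '' {i | i < j})).colon
      (Submodule.span (S K n) {f j})) = Ideal.span ((fun c => monomial c 1) '' E)) :
    GenByLinearForms K n
      ((Submodule.span (S K n) (f '' {i | i < j})).colon (Submodule.span (S K n) {f j})) := by
  set I := (Submodule.span (S K n) (f '' {i | i < j})).colon (Submodule.span (S K n) {f j})
  have hX : ∀ x ∈ f '' {i | i < j}, ∃ d, x ∈ ℳ d := by
    rintro _ ⟨i, -, rfl⟩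
    exact ⟨df i, hhom i⟩
  refine ⟨{ℓ | ℓ ∈ I ∧ ℓ ∈ homogeneousSubmodule (Fin n) K 1}, fun ℓ hℓ => hℓ.2,
    Ideal.eq_span_of_forall_exists_degree_le ord (fun ℓ hℓ => hℓ.1) fun g hg hg0 => ?_⟩
  obtain ⟨c, hc, h, hh, hh0, hhc, hcg⟩ := exists_degree_le_of_inIdeal_eq_span ord hin hg hg0
  have hdeg : (ord.degree h).degree = 1 := by
    refine le_antisymm ((degree_mono hhc).trans (hE c hc)) (Nat.one_le_iff_ne_zero.mpr ?_)
    intro h0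
    exact colon_ne_top_of_notMem_span hj
      (Ideal.eq_top_of_isUnit_mem _ hh (ord.isUnit_of_degree_eq_zero hh0
        ((Finsupp.degree_eq_zero_iff _).mp h0)))
  have hℓ : ord.degree (homogeneousComponent 1 h) = ord.degree h :=
    hdeg ▸ ord.degree_homogeneousComponent_degree h
  refine ⟨homogeneousComponent 1 h,
    ⟨hgr.homogeneousComponent_mem_colon hX (hhom j) hh 1, homogeneousComponent_mem 1 h⟩,
    fun h0 => ?_, hℓ ▸ hhc.trans hcg⟩
  rw [h0, ord.degree_zero] at hℓ
  simp [← hℓ] at hdeg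

theorem statement4_general (K : Type) [Field K] (n : ℕ)
    (M : Type) [AddCommGroup M] [Module (S K n) M] [Module K M]
    (ℳ : ℕ → Submodule K M) (hgr : IsGrading K n ℳ)
    (m : ℕ) (f : Fin m → M) (df : Fin m → ℕ)
    (hhom : ∀ j, f j ∈ ℳ (df j))
    (hmin : IsMinimalGenSys K n f)
    (ord : MonomialOrder (Fin n))
    (φ : (Fin m →₀ S K n) →ₗ[S K n] M)
    (hφ : φ = Finsupp.linearCombination (S K n) f)
    (C : Submodule (S K n) (Fin m →₀ S K n))
    (hC : C = LinearMap.ker φ)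
    -- the generators of the initial module of `C` are of the form `u e_i` with `deg u ≤ 1`
    (hgen : ∃ D : Set (Fin m × ((Fin n) →₀ ℕ)),
      (∀ jc ∈ D, (jc.2.sum fun _ e => e) ≤ 1) ∧
      Submodule.span (S K n)
        {w : Fin m →₀ S K n | ∃ v ∈ C, v ≠ 0 ∧ ∃ j : Fin m, v j ≠ 0 ∧
          (∀ j', j < j' → v j' = 0) ∧
          w = Finsupp.single j (monomial (leadExp ord (v j)) (1 : K))} =
      Submodule.span (S K n)
        ((fun jc : Fin m × ((Fin n) →₀ ℕ) =>
          Finsupp.single jc.1 (monomial jc.2 (1 : K))) '' D)) :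
    (∀ j : Fin m,
      (Submodule.span (S K n) (f '' {i | i < j})).colon (Submodule.span (S K n) {f j}) = ⊤ ∨
      GenByLinearForms K n
        ((Submodule.span (S K n) (f '' {i | i < j})).colon (Submodule.span (S K n) {f j}))) ∧
    HasLinearQuotientsWith K n f := by
  let _ : DirectSum.Decomposition ℳ := hgr.internal.chooseDecomposition
  obtain ⟨D, hD, hin⟩ := hgen
  change initialModule ord C = _ at hin
  subst hφ hC
  have hlin : ∀ j, GenByLinearForms K n
      ((Submodule.span (S K n) (f '' {i | i < j})).colon (Submodule.span (S K n) {f j})) := by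
    intro j
    refine genByLinearForms_colon hgr hhom (hmin.2 j) ord (E := {c | (j, c) ∈ D})
      (fun c hc => hD _ hc) ?_
    rw [← map_lapply_initialModule_ker, hin, map_lapply_span_single_monomial]
  exact ⟨fun j => Or.inr (hlin j), hmin.1, fun j => Or.inr (hlin j)⟩

/-- If every generator of the initial module of `C = ker φ` has the form
`u·e_i` with `deg u ≤ 1`, then each proper colon ideal `(f_1,…,f_{j-1}) : f_j` is generated by
linear forms; in particular `M` has linear quotients. -/
theorem statement4 (K : Type) [Field K] (n : ℕ)
    (M : Type) [AddCommGroup M] [Module (S K n) M] [Module K M] [IsScalarTower K (S K n) M]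
    (ℳ : ℕ → Submodule K M) (hgr : IsGrading K n ℳ)
    (hfin : Module.Finite (S K n) M)
    (m : ℕ) (f : Fin m → M) (df : Fin m → ℕ)
    (hhom : ∀ j, f j ∈ ℳ (df j))
    (hmin : IsMinimalGenSys K n f)
    (ord : MonomialOrder (Fin n))
    (φ : (Fin m →₀ S K n) →ₗ[S K n] M)
    (hφ : φ = Finsupp.linearCombination (S K n) f)
    (C : Submodule (S K n) (Fin m →₀ S K n))
    (hC : C = LinearMap.ker φ)
    -- the generators of the initial module of `C` are of the form `u e_i` with `deg u ≤ 1`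
    (hgen : ∃ D : Set (Fin m × ((Fin n) →₀ ℕ)),
      (∀ jc ∈ D, (jc.2.sum fun _ e => e) ≤ 1) ∧
      Submodule.span (S K n)
        {w : Fin m →₀ S K n | ∃ v ∈ C, v ≠ 0 ∧ ∃ j : Fin m, v j ≠ 0 ∧
          (∀ j', j < j' → v j' = 0) ∧
          w = Finsupp.single j (monomial (leadExp ord (v j)) (1 : K))} =
      Submodule.span (S K n)
        ((fun jc : Fin m × ((Fin n) →₀ ℕ) =>
          Finsupp.single jc.1 (monomial jc.2 (1 : K))) '' D)) :
    (∀ j : Fin m,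
      (Submodule.span (S K n) (f '' {i | i < j})).colon (Submodule.span (S K n) {f j}) = ⊤ ∨
      GenByLinearForms K n
        ((Submodule.span (S K n) (f '' {i | i < j})).colon (Submodule.span (S K n) {f j}))) ∧
    HasLinearQuotientsWith K n f :=
  statement4_general K n M ℳ hgr m f df hhom hmin ord φ hφ C hC hgen

end Paper
end

section
/- Let A = S[A_1] be a bigraded K-algebra with A_0 = S = K[x_1,...,x_n], presented by φ: T = K[x_1,...,x_n,y_1,...,y_m] → A with φ(y_j) = f_j generating A_1, and let J = Ker(φ). Suppose J satisfies the x-condition with respect to a monomial order < on T that first compares the y-part by a monomial order <' on K[y_1,...,y_m] and then the x-part by a monomial order on K[x_1,...,x_n]. Then for all k ≥ 1 the graded S-module A_k has linear quotients. -/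
open MvPolynomial Finsupp

namespace Paper

open MvPolynomial

variable (K : Type) [Field K] (n m : ℕ)

/-- The bigraded polynomial ring `T = K[x_1,…,x_n,y_1,…,y_m]`. -/
abbrev TT := MvPolynomial (Fin n ⊕ Fin m) K

/-- The inclusion `S → T` on the `x`-variables. -/
noncomputable def ιS : S K n →ₐ[K] TT K n m := rename Sum.inl

noncomputable instance : Algebra (S K n) (TT K n m) := (ιS K n m).toRingHom.toAlgebra

/-- The monomial `y^c` in `T`. -/
noncomputable def ymon (c : Fin m →₀ ℕ) : TT K n m :=
  monomial (Finsupp.mapDomain Sum.inr c) (1 : K)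

/-- Total `x`-degree of an exponent vector of `T`. -/
def xdegT (c : (Fin n ⊕ Fin m) →₀ ℕ) : ℕ := ∑ i : Fin n, c (Sum.inl i)

/-- Total `y`-degree of an exponent vector of `T`. -/
def ydegT (c : (Fin n ⊕ Fin m) →₀ ℕ) : ℕ := ∑ j : Fin m, c (Sum.inr j)

/-- Degree of a `y`-exponent vector. -/
def ydeg (c : Fin m →₀ ℕ) : ℕ := ∑ j : Fin m, c j

/-- `J` is a bihomogeneous ideal of `T`, where `deg x_i = (1,0)` and `deg y_j = (dY j, 1)`. -/
def IsBihomogIdeal (dY : Fin m → ℕ) (J : Ideal (TT K n m)) : Prop :=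
  ∃ Gs : Set (TT K n m),
    (∀ g ∈ Gs, ∃ a b : ℕ, ∀ c ∈ g.support,
        (xdegT n m c + ∑ j : Fin m, c (Sum.inr j) * dY j = a) ∧ ydegT n m c = b) ∧
    J = Ideal.span Gs

/-- `A_0 = S`: the polynomial subring `S` of `T` meets `J` trivially. -/
def SInjectsModJ (J : Ideal (TT K n m)) : Prop :=
  ∀ p : S K n, ιS K n m p ∈ J → p = 0

/-- The `S`-module `A_k` (the `y`-degree-`k` component of `A = T/J`) has linear quotients:
there is a system of generators of `A_k` given by (classes of) monomials in the `y`'s of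
degree `k` whose successive colon ideals are generated by linear forms. All computations
are performed in `T` modulo `J`. -/
def AkHasLinearQuotients (J : Ideal (TT K n m)) (k : ℕ) : Prop :=
  ∃ (s : ℕ) (H : Fin s → (Fin m →₀ ℕ)),
    (∀ j, ydeg m (H j) = k) ∧
    -- the monomials `y^{H j}` generate `A_k` over `S`
    (∀ c : Fin m →₀ ℕ, ydeg m c = k →
      ymon K n m c ∈
        Submodule.span (S K n) (Set.range (fun j => ymon K n m (H j))) ⊔
          (J : Submodule (TT K n m) (TT K n m)).restrictScalars (S K n)) ∧
    -- successive colon ideals are `S` or generated by linear forms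
    (∀ j : Fin s,
      ((Submodule.span (S K n) ((fun j' => ymon K n m (H j')) '' {i | i < j}) ⊔
          (J : Submodule (TT K n m) (TT K n m)).restrictScalars (S K n)).colon
        (Submodule.span (S K n) {ymon K n m (H j)}) = ⊤) ∨
      GenByLinearForms K n
        ((Submodule.span (S K n) ((fun j' => ymon K n m (H j')) '' {i | i < j}) ⊔
            (J : Submodule (TT K n m) (TT K n m)).restrictScalars (S K n)).colon
          (Submodule.span (S K n) {ymon K n m (H j)})))

end Paper

/-!
List the degree-`k` monomials `y^u` increasingly for `<'` and let `Q_u` be the colon ideal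
`((y^b : b <' u) + J) : y^u`. For `0 ≠ t ∈ Q_u`, write `t y^u = p + g` with `p` a combination of
earlier `y^b` and `g ∈ J`; since `<` compares `y`-parts first, the leading monomial of `g` is
`x^a y^u` with `x^a` the leading monomial of `t`. By the x-condition a generator of `in(J)` of
the form `y^w` or `x_i y^w` divides it, so `y^u` or `x_i y^u` (with `x_i ∣ x^a`) lies in `in(J)`.
Reducing a bihomogeneous element of `J` with that leading monomial modulo the earlier `y^b` gives
an element of `Q_u` with leading monomial `1` (then `Q_u = S`) or a linear form with leading
monomial `x_i`. So the monic linear forms in `Q_u` form a Gröbner basis of `Q_u`, and generate it.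
-/

open scoped MonomialOrder

namespace MonomialOrder

variable {σ R : Type*} (m : MonomialOrder σ)

theorem degree_eq_of_coeff_ne_zero [CommSemiring R] {f : MvPolynomial σ R} {d : σ →₀ ℕ}
    (hd : coeff d f ≠ 0) (hle : ∀ c ∈ f.support, c ≼[m] d) : m.degree f = d :=
  m.toSyn.injective <|
    le_antisymm (m.degree_le_iff.mpr hle) (m.le_degree (MvPolynomial.mem_support_iff.mpr hd))

theorem ideal_eq_span_of_forall_exists_degree_le [CommRing R] {I : Ideal (MvPolynomial σ R)}
    {G : Set (MvPolynomial σ R)} (hGI : G ⊆ I) (hG : ∀ g ∈ G, IsUnit (m.leadingCoeff g))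
    (hI : ∀ f ∈ I, f ≠ 0 → ∃ g ∈ G, m.degree g ≤ m.degree f) : I = Ideal.span G := by
  refine le_antisymm (fun f hf => ?_) (Ideal.span_le.mpr hGI)
  obtain ⟨q, r, hfqr, -, hr⟩ := m.div_set hG f
  have hq : linearCombination _ (fun g : G => (g : MvPolynomial σ R)) q ∈ Ideal.span G := by
    have := LinearMap.mem_range_self
      (linearCombination (MvPolynomial σ R) (fun g : G => (g : MvPolynomial σ R))) q
    rwa [Finsupp.range_linearCombination, Subtype.range_coe] at this
  suffices r = 0 by rwa [hfqr, this, add_zero]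
  by_contra hr0
  have hrI : r ∈ I := by
    rw [eq_sub_of_add_eq' hfqr.symm]
    exact I.sub_mem hf (Ideal.span_le.mpr hGI hq)
  obtain ⟨g, hgG, hg⟩ := hI r hrI hr0
  exact hr _ (m.degree_mem_support hr0) g hgG hg

end MonomialOrder

namespace MvPolynomial

theorem monomial_one_mem_ideal_span_monomial_image_iff {σ R : Type*} [CommSemiring R]
    [Nontrivial R] {D : Set (σ →₀ ℕ)} {e : σ →₀ ℕ} :
    monomial e (1 : R) ∈ Ideal.span ((fun c => monomial c (1 : R)) '' D) ↔
      ∃ d ∈ D, d ≤ e := by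
  classical
  simp [mem_ideal_span_monomial_image, support_monomial]

end MvPolynomial

section InitialIdeal

variable {σ : Type*} {K : Type} [Field K] (m : MonomialOrder σ) {J : Ideal (MvPolynomial σ K)}

theorem monomial_degree_mem_inIdeal {g : MvPolynomial σ K} (hg : g ∈ J) (hg0 : g ≠ 0) :
    monomial (m.degree g) (1 : K) ∈ inIdeal m J :=
  Ideal.subset_span ⟨g, ⟨hg, hg0⟩, rfl⟩

theorem exists_degree_le_of_monomial_mem_inIdeal {d : σ →₀ ℕ}
    (hd : monomial d (1 : K) ∈ inIdeal m J) : ∃ g ∈ J, g ≠ 0 ∧ m.degree g ≤ d := by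
  rw [inIdeal, ← Set.image_image (fun c => monomial c (1 : K)) (leadExp m),
    monomial_one_mem_ideal_span_monomial_image_iff] at hd
  obtain ⟨-, ⟨g, ⟨hgJ, hg0⟩, rfl⟩, hle⟩ := hd
  exact ⟨g, hgJ, hg0, hle⟩

theorem exists_monic_isWeightedHomogeneous_of_monomial_mem_inIdeal {M : Type*}
    [AddCommMonoid M] (w : σ → M)
    (hJ : ∀ p ∈ J, ∀ δ, weightedHomogeneousComponent w δ p ∈ J) {d : σ →₀ ℕ}
    (hd : monomial d (1 : K) ∈ inIdeal m J) :
    ∃ h ∈ J, IsWeightedHomogeneous w h (weight w d) ∧ m.Monic h ∧ m.degree h = d := by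
  classical
  obtain ⟨g, hgJ, hg0, hgd⟩ := exists_degree_le_of_monomial_mem_inIdeal m hd
  have hlc : m.leadingCoeff g ≠ 0 := m.leadingCoeff_ne_zero_iff.mpr hg0
  set g' := monomial (d - m.degree g) (m.leadingCoeff g)⁻¹ * g
  have hmon0 : monomial (d - m.degree g) (m.leadingCoeff g)⁻¹ ≠ 0 := by simpa using hlc
  have hg'd : m.degree g' = d := by
    rw [m.degree_mul hmon0 hg0, m.degree_monomial, if_neg (inv_ne_zero hlc),
      tsub_add_cancel_of_le hgd]
  have hg'lc : m.leadingCoeff g' = 1 := by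
    rw [m.leadingCoeff_mul, m.leadingCoeff_monomial, inv_mul_cancel₀ hlc]
  set h := weightedHomogeneousComponent w (weight w d) g'
  have hcoeff : ∀ c, coeff c h = if weight w c = weight w d then coeff c g' else 0 :=
    fun c => coeff_weightedHomogeneousComponent _ _ c
  have hhd : coeff d h = 1 := by
    rw [hcoeff, if_pos rfl, ← hg'lc, MonomialOrder.leadingCoeff, hg'd]
  have hdeg : m.degree h = d := by
    refine m.degree_eq_of_coeff_ne_zero (by simp [hhd]) fun c hc => ?_
    rw [MvPolynomial.mem_support_iff, hcoeff] at hc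
    rw [← hg'd]
    exact m.le_degree (MvPolynomial.mem_support_iff.mpr fun h0 => hc (by simp [h0]))
  refine ⟨h, hJ g' (J.mul_mem_left _ hgJ) _,
    weightedHomogeneousComponent_isWeightedHomogeneous _ _, ?_, hdeg⟩
  rw [MonomialOrder.Monic, MonomialOrder.leadingCoeff, hdeg, hhd]

end InitialIdeal

section BlockExponents

variable {A B : Type*}

@[simp] theorem xPart_apply (c : (A ⊕ B) →₀ ℕ) (i : A) : xPart c i = c (Sum.inl i) := rfl

@[simp] theorem yPart_apply (c : (A ⊕ B) →₀ ℕ) (j : B) : yPart c j = c (Sum.inr j) := rfl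

@[simp] theorem xPart_sumElim (a : A →₀ ℕ) (b : B →₀ ℕ) : xPart (sumElim a b) = a := by
  ext; rfl

@[simp] theorem yPart_sumElim (a : A →₀ ℕ) (b : B →₀ ℕ) : yPart (sumElim a b) = b := by
  ext; rfl

@[simp] theorem sumElim_xPart_yPart (c : (A ⊕ B) →₀ ℕ) :
    sumElim (xPart c) (yPart c) = c := by
  ext (i | j) <;> rfl

theorem ComparesYFirst.yPart_le {ord : MonomialOrder (A ⊕ B)} {ordY : MonomialOrder B}
    {ordX : MonomialOrder A} (hcomp : ComparesYFirst ord ordY ordX) {c d : (A ⊕ B) →₀ ℕ}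
    (h : c ≼[ord] d) : yPart c ≼[ordY] yPart d :=
  not_lt.mp fun hlt => not_le.mpr ((hcomp d c).mpr (Or.inl hlt)) h

theorem ComparesYFirst.le_iff_xPart_le {ord : MonomialOrder (A ⊕ B)} {ordY : MonomialOrder B}
    {ordX : MonomialOrder A} (hcomp : ComparesYFirst ord ordY ordX) {c d : (A ⊕ B) →₀ ℕ}
    (hy : yPart c = yPart d) : c ≼[ord] d ↔ xPart c ≼[ordX] xPart d := by
  rw [← not_lt, ← not_lt, hcomp d c, hy]
  simp

end BlockExponents

theorem Finset.exists_range_eq_and_strictMono_comp {α β : Type*} [LinearOrder β] (F : Finset α)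
    {f : α → β} (hf : Function.Injective f) :
    ∃ e : Fin F.card → α, Set.range e = F ∧ StrictMono (f ∘ e) := by
  let := LinearOrder.lift' f hf
  exact ⟨F.orderEmbOfFin rfl, F.range_orderEmbOfFin rfl, (F.orderEmbOfFin rfl).strictMono⟩

namespace Paper

variable {K : Type} [Field K] {n m : ℕ}

section Bigrading

def bidegWeight (dY : Fin m → ℕ) : Fin n ⊕ Fin m → ℕ × ℕ :=
  Sum.elim (fun _ => (1, 0)) (fun j => (dY j, 1))

theorem weight_bidegWeight (dY : Fin m → ℕ) (c : (Fin n ⊕ Fin m) →₀ ℕ) :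
    weight (bidegWeight dY) c =
      (xdegT n m c + ∑ j : Fin m, c (Sum.inr j) * dY j, ydegT n m c) := by
  rw [Finsupp.weight_apply, Finsupp.sum_fintype _ _ (fun i => by simp), Fintype.sum_sum_type]
  ext
  · simp [bidegWeight, xdegT, Prod.fst_sum, mul_comm]
  · simp [bidegWeight, ydegT, Prod.snd_sum]

theorem ydeg_yPart_eq_of_weight_eq {dY : Fin m → ℕ} {c d : (Fin n ⊕ Fin m) →₀ ℕ}
    (h : weight (bidegWeight dY) c = weight (bidegWeight dY) d) :
    ydeg m (yPart c) = ydeg m (yPart d) := by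
  simpa [weight_bidegWeight, ydegT, ydeg] using congrArg Prod.snd h

theorem degree_xPart_eq_of_weight_eq {dY : Fin m → ℕ} {c d : (Fin n ⊕ Fin m) →₀ ℕ}
    (h : weight (bidegWeight dY) c = weight (bidegWeight dY) d) (hy : yPart c = yPart d) :
    (xPart c).degree = (xPart d).degree := by
  have hfst := congrArg Prod.fst h
  have hyj : ∀ j, c (Sum.inr j) = d (Sum.inr j) := fun j => DFunLike.congr_fun hy j
  simp only [weight_bidegWeight, xdegT, hyj] at hfst
  simpa [Finsupp.degree_eq_sum] using hfst

theorem IsBihomogIdeal.weightedHomogeneousComponent_mem {dY : Fin m → ℕ} {J : Ideal (TT K n m)}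
    (hJ : IsBihomogIdeal K n m dY J) {p : TT K n m} (hp : p ∈ J) (δ : ℕ × ℕ) :
    weightedHomogeneousComponent (bidegWeight dY) δ p ∈ J := by
  classical
  obtain ⟨Gs, hGs, rfl⟩ := hJ
  let := weightedGradedAlgebra K (bidegWeight (n := n) dY)
  have hhom : (Ideal.span Gs).IsHomogeneous (weightedHomogeneousSubmodule K (bidegWeight dY)) := by
    refine Ideal.homogeneous_span _ _ fun g hg => ?_
    obtain ⟨a, b, hab⟩ := hGs g hg
    refine ⟨(a, b), fun c hc => ?_⟩
    obtain ⟨hca, hcb⟩ := hab c (MvPolynomial.mem_support_iff.mpr hc)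
    rw [weight_bidegWeight, hca, hcb]
  rw [← MvPolynomial.decompose'_apply K]
  exact hhom δ hp

end Bigrading

section YMonomials

theorem smul_eq_ιS_mul (s : S K n) (p : TT K n m) : s • p = ιS K n m s * p := rfl

theorem ymon_eq_monomial (u : Fin m →₀ ℕ) : ymon K n m u = monomial (sumElim 0 u) 1 := by
  rw [ymon, sumElim_eq_add, Finsupp.mapDomain_zero, zero_add]

theorem ιS_monomial (a : Fin n →₀ ℕ) (r : K) :
    ιS K n m (monomial a r) = monomial (sumElim a 0) r := by
  rw [ιS, rename_monomial, sumElim_eq_add, Finsupp.mapDomain_zero, add_zero]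

theorem coeff_ιS_mul_ymon (s : S K n) (u : Fin m →₀ ℕ) (c : (Fin n ⊕ Fin m) →₀ ℕ) :
    coeff c (ιS K n m s * ymon K n m u) = if yPart c = u then coeff (xPart c) s else 0 := by
  classical
  induction s using MvPolynomial.induction_on' with
  | monomial a r =>
    have hc : sumElim a u = c ↔ yPart c = u ∧ a = xPart c := by
      constructor
      · rintro rfl
        simp
      · rintro ⟨rfl, rfl⟩
        simp
    rw [ιS_monomial, ymon_eq_monomial, monomial_mul, mul_one, ← sumElim_add, add_zero,
      zero_add, coeff_monomial, coeff_monomial]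
    simp only [hc, ite_and]
  | add p q hp hq =>
    rw [map_add, add_mul, coeff_add, hp, hq]
    split_ifs <;> simp

theorem monomial_eq_smul_ymon (c : (Fin n ⊕ Fin m) →₀ ℕ) (r : K) :
    monomial c r = (monomial (xPart c) r : S K n) • ymon K n m (yPart c) := by
  rw [smul_eq_ιS_mul, ιS_monomial, ymon_eq_monomial, monomial_mul, mul_one,
    ← sumElim_add, add_zero, zero_add, sumElim_xPart_yPart]

theorem mem_span_ymon_iff {B : Set (Fin m →₀ ℕ)} {p : TT K n m} :
    p ∈ Submodule.span (S K n) (ymon K n m '' B) ↔ ∀ c ∈ p.support, yPart c ∈ B := by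
  classical
  constructor
  · intro hp c hc
    obtain ⟨l, hlB, rfl⟩ := (Finsupp.mem_span_image_iff_linearCombination _).mp hp
    rw [MvPolynomial.mem_support_iff, Finsupp.linearCombination_apply, Finsupp.sum,
      coeff_sum] at hc
    obtain ⟨b, hb, hcb⟩ := Finset.exists_ne_zero_of_sum_ne_zero hc
    rw [smul_eq_ιS_mul, coeff_ιS_mul_ymon] at hcb
    split_ifs at hcb with hcb'
    · exact hcb' ▸ hlB hb
    · exact absurd rfl hcb
  · intro h
    rw [p.as_sum]
    refine Submodule.sum_mem _ fun c hc => ?_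
    rw [monomial_eq_smul_ymon]
    exact Submodule.smul_mem _ _ (Submodule.subset_span ⟨_, h c hc, rfl⟩)

/-- The coefficient of `y^u` in `p ∈ T = S[y_1,…,y_m]`. -/
noncomputable def yCoeff (u : Fin m →₀ ℕ) (p : TT K n m) : S K n :=
  ∑ c ∈ p.support with yPart c = u, monomial (xPart c) (coeff c p)

theorem coeff_yCoeff (u : Fin m →₀ ℕ) (p : TT K n m) (a : Fin n →₀ ℕ) :
    coeff a (yCoeff u p) = coeff (sumElim a u) p := by
  classical
  rw [yCoeff, coeff_sum, Finset.sum_eq_single (sumElim a u)]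
  · simp
  · rintro c hc hne
    rw [coeff_monomial, if_neg]
    rintro rfl
    rw [← (Finset.mem_filter.mp hc).2, sumElim_xPart_yPart] at hne
    exact hne rfl
  · intro h
    rw [coeff_monomial, if_pos (xPart_sumElim a u)]
    simpa using h

theorem sub_ιS_yCoeff_mul_ymon_mem_span {B : Set (Fin m →₀ ℕ)} {u : Fin m →₀ ℕ}
    {p : TT K n m} (h : ∀ c ∈ p.support, yPart c ≠ u → yPart c ∈ B) :
    p - ιS K n m (yCoeff u p) * ymon K n m u ∈ Submodule.span (S K n) (ymon K n m '' B) := by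
  refine mem_span_ymon_iff.mpr fun c hc => ?_
  rw [MvPolynomial.mem_support_iff, coeff_sub, coeff_ιS_mul_ymon] at hc
  split_ifs at hc with hcu
  · rw [coeff_yCoeff, ← hcu, sumElim_xPart_yPart, sub_self] at hc
    exact absurd rfl hc
  · exact h c (MvPolynomial.mem_support_iff.mpr (by simpa using hc)) hcu

end YMonomials

section Colon

variable {J : Ideal (TT K n m)} {ordY : MonomialOrder (Fin m)}

def yExpsBelow (ordY : MonomialOrder (Fin m)) (u : Fin m →₀ ℕ) : Set (Fin m →₀ ℕ) :=
  {b | ydeg m b = ydeg m u ∧ b ≺[ordY] u}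

theorem notMem_yExpsBelow_self (u : Fin m →₀ ℕ) : u ∉ yExpsBelow ordY u :=
  fun h => lt_irrefl _ h.2

noncomputable def yColon (J : Ideal (TT K n m)) (ordY : MonomialOrder (Fin m))
    (u : Fin m →₀ ℕ) : Ideal (S K n) :=
  (Submodule.span (S K n) (ymon K n m '' yExpsBelow ordY u) ⊔
      (J : Submodule (TT K n m) (TT K n m)).restrictScalars (S K n)).colon
    (Submodule.span (S K n) {ymon K n m u})

theorem mem_yColon_iff {u : Fin m →₀ ℕ} {r : S K n} :
    r ∈ yColon J ordY u ↔ ∃ p ∈ Submodule.span (S K n) (ymon K n m '' yExpsBelow ordY u),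
      ιS K n m r * ymon K n m u - p ∈ J := by
  rw [yColon, Submodule.mem_colon_span_singleton, Submodule.mem_sup, smul_eq_ιS_mul]
  constructor
  · rintro ⟨p, hp, g, hg, hpg⟩
    exact ⟨p, hp, by rwa [← hpg, add_sub_cancel_left]⟩
  · rintro ⟨p, hp, hg⟩
    exact ⟨p, hp, _, hg, add_sub_cancel _ _⟩

variable {dY : Fin m → ℕ} {ord : MonomialOrder (Fin n ⊕ Fin m)} {ordX : MonomialOrder (Fin n)}

theorem exists_monic_mem_yColon_of_monomial_mem_inIdeal (hcomp : ComparesYFirst ord ordY ordX)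
    (hJ : IsBihomogIdeal K n m dY J) {a : Fin n →₀ ℕ} {u : Fin m →₀ ℕ}
    (hau : monomial (sumElim a u) (1 : K) ∈ inIdeal ord J) :
    ∃ ℓ ∈ yColon J ordY u, ℓ ∈ homogeneousSubmodule (Fin n) K a.degree ∧
      ordX.Monic ℓ ∧ ordX.degree ℓ = a := by
  obtain ⟨h, hJh, hhom, hmonic, hdeg⟩ :=
    exists_monic_isWeightedHomogeneous_of_monomial_mem_inIdeal ord (bidegWeight dY)
      (fun _ hp δ => hJ.weightedHomogeneousComponent_mem hp δ) hau
  set E := sumElim a u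
  have hsupp : ∀ c ∈ h.support,
      weight (bidegWeight dY) c = weight (bidegWeight dY) E ∧ c ≼[ord] E :=
    fun c hc => ⟨hhom (MvPolynomial.mem_support_iff.mp hc), hdeg ▸ ord.le_degree hc⟩
  have hcoeff : coeff a (yCoeff u h) = 1 := by
    rw [coeff_yCoeff, ← hmonic, MonomialOrder.leadingCoeff, hdeg]
  have hle : ∀ a' ∈ (yCoeff u h).support, a' ≼[ordX] a := by
    intro a' ha'
    rw [MvPolynomial.mem_support_iff, coeff_yCoeff] at ha'
    simpa [E] using (hcomp.le_iff_xPart_le (by simp [E])).mp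
      (hsupp _ (MvPolynomial.mem_support_iff.mpr ha')).2
  have hdegℓ : ordX.degree (yCoeff u h) = a :=
    ordX.degree_eq_of_coeff_ne_zero (by simp [hcoeff]) hle
  refine ⟨yCoeff u h, mem_yColon_iff.mpr ⟨_, ?_, by rwa [sub_sub_cancel]⟩, ?_,
    by rw [MonomialOrder.Monic, MonomialOrder.leadingCoeff, hdegℓ, hcoeff], hdegℓ⟩
  · rw [← neg_sub]
    refine Submodule.neg_mem _ (sub_ιS_yCoeff_mul_ymon_mem_span fun c hc hcu => ?_)
    obtain ⟨hw, hcE⟩ := hsupp c hc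
    refine ⟨by simpa [E] using ydeg_yPart_eq_of_weight_eq hw, ?_⟩
    exact lt_of_le_of_ne (by simpa [E] using hcomp.yPart_le hcE)
      (fun heq => hcu (ordY.toSyn.injective heq))
  · intro a' ha'
    rw [coeff_yCoeff] at ha'
    have hw := (hsupp _ (MvPolynomial.mem_support_iff.mpr ha')).1
    rw [Pi.one_def, ← Finsupp.degree_eq_weight_one]
    simpa [E] using degree_xPart_eq_of_weight_eq hw (by simp [E])

theorem monomial_mem_inIdeal_of_mem_yColon (hcomp : ComparesYFirst ord ordY ordX)
    {u : Fin m →₀ ℕ} {t : S K n} (ht : t ∈ yColon J ordY u) (ht0 : t ≠ 0) :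
    monomial (sumElim (ordX.degree t) u) (1 : K) ∈ inIdeal ord J := by
  obtain ⟨p, hp, hg⟩ := mem_yColon_iff.mp ht
  have hpB := mem_span_ymon_iff.mp hp
  have hpu : ∀ c, yPart c = u → coeff c p = 0 := fun c hcu => by
    by_contra hc
    exact notMem_yExpsBelow_self u (hcu ▸ hpB c (MvPolynomial.mem_support_iff.mpr hc))
  set g := ιS K n m t * ymon K n m u - p
  have hgE : coeff (sumElim (ordX.degree t) u) g ≠ 0 := by
    simpa [g, coeff_ιS_mul_ymon, hpu] using ordX.leadingCoeff_ne_zero_iff.mpr ht0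
  have hdeg : ord.degree g = sumElim (ordX.degree t) u := by
    refine ord.degree_eq_of_coeff_ne_zero hgE fun c hc => ?_
    rw [MvPolynomial.mem_support_iff, coeff_sub, coeff_ιS_mul_ymon] at hc
    by_cases hcu : yPart c = u
    · rw [if_pos hcu, hpu c hcu, sub_zero] at hc
      refine (hcomp.le_iff_xPart_le (by simpa using hcu)).mpr ?_
      simpa using ordX.le_degree (MvPolynomial.mem_support_iff.mpr hc)
    · rw [if_neg hcu, zero_sub, neg_ne_zero] at hc
      refine ((hcomp c _).mpr (Or.inl ?_)).le
      simpa using (hpB c (MvPolynomial.mem_support_iff.mpr hc)).2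
  rw [← hdeg]
  exact monomial_degree_mem_inIdeal ord hg fun hg0 => hgE (by simp [hg0])

theorem yColon_eq_top_or_genByLinearForms (hcomp : ComparesYFirst ord ordY ordX)
    (hJ : IsBihomogIdeal K n m dY J) (hx : XCondition ord J) (u : Fin m →₀ ℕ) :
    yColon J ordY u = ⊤ ∨ GenByLinearForms K n (yColon J ordY u) := by
  obtain ⟨D, hD1, hD⟩ := hx
  by_cases htop : yColon J ordY u = ⊤
  · exact Or.inl htop
  refine Or.inr
    ⟨{ℓ ∈ yColon J ordY u | ℓ ∈ homogeneousSubmodule (Fin n) K 1 ∧ ordX.Monic ℓ},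
    fun ℓ hℓ => hℓ.2.1, ?_⟩
  refine ordX.ideal_eq_span_of_forall_exists_degree_le (fun ℓ hℓ => hℓ.1)
    (fun ℓ hℓ => hℓ.2.2.symm ▸ isUnit_one) fun t ht ht0 => ?_
  obtain ⟨d, hdD, hdle⟩ := monomial_one_mem_ideal_span_monomial_image_iff.mp
    (hD ▸ monomial_mem_inIdeal_of_mem_yColon hcomp ht ht0)
  have hd : monomial (sumElim (xPart d) u) (1 : K) ∈ inIdeal ord J := by
    rw [hD, monomial_one_mem_ideal_span_monomial_image_iff]
    exact ⟨d, hdD, fun | .inl _ => le_rfl | .inr j => hdle (.inr j)⟩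
  obtain ⟨ℓ, hℓ, hℓhom, hℓmonic, hℓdeg⟩ :=
    exists_monic_mem_yColon_of_monomial_mem_inIdeal hcomp hJ hd
  have hdx : (xPart d).degree ≤ 1 := by simpa [Finsupp.degree_eq_sum] using hD1 d hdD
  rcases Nat.le_one_iff_eq_zero_or_eq_one.mp hdx with h0 | h1
  · refine absurd ((Ideal.eq_top_iff_one _).mpr ?_) htop
    rw [Finsupp.degree_eq_zero_iff] at h0
    rwa [ordX.eq_C_of_degree_eq_zero (hℓdeg.trans h0), hℓmonic, C_1] at hℓ
  · exact ⟨ℓ, ⟨hℓ, h1 ▸ hℓhom, hℓmonic⟩, hℓdeg ▸ fun i => hdle (.inl i)⟩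

end Colon

theorem statement5_general (K : Type) [Field K] (n m : ℕ)
    (dY : Fin m → ℕ) (J : Ideal (TT K n m))
    (ord : MonomialOrder (Fin n ⊕ Fin m))
    (ordY : MonomialOrder (Fin m)) (ordX : MonomialOrder (Fin n))
    (hcomp : ComparesYFirst ord ordY ordX)
    (hbihom : IsBihomogIdeal K n m dY J)
    (hx : XCondition ord J) :
    ∀ k : ℕ, 1 ≤ k → AkHasLinearQuotients K n m J k := by
  intro k _
  obtain ⟨H, hHrange, hHmono⟩ :=
    (Finset.univ.finsuppAntidiag k).exists_range_eq_and_strictMono_comp ordY.toSyn.injective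
  have hmemH : ∀ c, c ∈ Set.range H ↔ ydeg m c = k := by
    simp [hHrange, Finset.mem_finsuppAntidiag, ydeg]
  have hHk : ∀ j, ydeg m (H j) = k := fun j => (hmemH _).mp ⟨j, rfl⟩
  have hbelow : ∀ j, H '' {i | i < j} = yExpsBelow ordY (H j) := by
    intro j
    ext b
    constructor
    · rintro ⟨i, hij, rfl⟩
      exact ⟨(hHk i).trans (hHk j).symm, hHmono hij⟩
    · rintro ⟨hb, hlt⟩
      obtain ⟨i, rfl⟩ := (hmemH b).mpr (hb.trans (hHk j))
      exact ⟨i, hHmono.lt_iff_lt.mp hlt, rfl⟩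
  refine ⟨_, H, hHk, fun c hc => ?_, fun j => ?_⟩
  · obtain ⟨j, rfl⟩ := (hmemH c).mpr hc
    exact Submodule.mem_sup_left (Submodule.subset_span ⟨j, rfl⟩)
  · rw [← Set.image_image (ymon K n m) H, hbelow]
    exact yColon_eq_top_or_genByLinearForms hcomp hbihom hx (H j)

/-- If the defining ideal `J` of the bigraded algebra `A = S[A_1] = T/J`
satisfies the x-condition with respect to a monomial order comparing the `y`-part first,
then every component `A_k`, `k ≥ 1`, has linear quotients as a graded `S`-module. -/
theorem statement5 (K : Type) [Field K] (n m : ℕ)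
    (dY : Fin m → ℕ) (J : Ideal (TT K n m))
    (ord : MonomialOrder (Fin n ⊕ Fin m))
    (ordY : MonomialOrder (Fin m)) (ordX : MonomialOrder (Fin n))
    (hcomp : ComparesYFirst ord ordY ordX)
    (hbihom : IsBihomogIdeal K n m dY J)
    (hS : SInjectsModJ K n m J)
    (hx : XCondition ord J) :
    ∀ k : ℕ, 1 ≤ k → AkHasLinearQuotients K n m J k :=
  statement5_general K n m dY J ord ordY ordX hcomp hbihom hx

end Paper
end

section
/- Let A = Sym(M) or more generally a bigraded algebra T/J as above, and let 𝒢 be the reduced Gröbner basis of J with respect to the monomial order <. If every element of 𝒢 lies in the ideal (x_1,...,x_n)T, then for each k ≥ 1 the set {h_1,...,h_s} of elements of A_k corresponding to standard monomials of y-degree k is a minimal generating set of the S-module A_k. -/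
open MvPolynomial Finsupp

/-! Every leading monomial of the Gröbner basis involves an `x`, so no pure `y`-monomial lies in
`in_<(J)`: all `y`-monomials of degree `k` are standard, hence are among the `h_j`. Since the
Gröbner basis generates `J`, we get `J ⊆ (x_1,…,x_n)T`; setting `x = 0` then sends `A_k` onto the
`K`-vector space with basis the `y`-monomials of degree `k`, so no `h_j` is redundant. -/

section GroebnerBasis

variable {σ : Type*} {K : Type} [Field K] (m : MonomialOrder σ) {J : Ideal (MvPolynomial σ K)}
  {Gs : Set (MvPolynomial σ K)}

theorem monomial_mem_span_leadExp_iff {d : σ →₀ ℕ} :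
    monomial d (1 : K) ∈ Ideal.span ((fun g => monomial (leadExp m g) (1 : K)) '' Gs) ↔
      ∃ g ∈ Gs, leadExp m g ≤ d := by
  classical
  rw [← Set.image_image (fun d => monomial d (1 : K)), mem_ideal_span_monomial_image]
  simp

/-- The remainder of `f ∈ J` on division by `Gs` lies in `J`; were it nonzero, its leading
exponent would be divisible by some `leadExp m g`, which division excludes. -/
theorem span_eq_of_inIdeal_eq (hGsJ : Gs ⊆ J) (hGs0 : ∀ g ∈ Gs, g ≠ 0)
    (hGB : inIdeal m J = Ideal.span ((fun g => monomial (leadExp m g) (1 : K)) '' Gs)) :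
    Ideal.span Gs = J := by
  refine le_antisymm (Ideal.span_le.mpr hGsJ) fun f hf => ?_
  obtain ⟨q, r, rfl, -, hr⟩ := m.div_set
    (fun g hg => (m.leadingCoeff_ne_zero_iff.mpr (hGs0 g hg)).isUnit) f
  have hq : Finsupp.linearCombination _ (fun g : Gs => (g : MvPolynomial σ K)) q ∈ Ideal.span Gs :=
    (Finsupp.mem_span_iff_linearCombination _ _ _).mpr ⟨q, rfl⟩
  suffices r = 0 by rwa [this, add_zero]
  by_contra hr0
  have hrJ : r ∈ J := by simpa using J.sub_mem hf (Ideal.span_le.mpr hGsJ hq)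
  have hlead : monomial (leadExp m r) (1 : K) ∈ inIdeal m J :=
    Ideal.subset_span ⟨r, ⟨hrJ, hr0⟩, rfl⟩
  obtain ⟨g, hg, hle⟩ := (monomial_mem_span_leadExp_iff m).mp (hGB ▸ hlead)
  exact hr _ (m.degree_mem_support hr0) g hg hle

theorem monomial_notMem_inIdeal_of_subset_span_X {s : Set σ} (hGs0 : ∀ g ∈ Gs, g ≠ 0)
    (hGB : inIdeal m J = Ideal.span ((fun g => monomial (leadExp m g) (1 : K)) '' Gs))
    (hGs : ∀ g ∈ Gs, g ∈ Ideal.span (X '' s)) {d : σ →₀ ℕ} (hd : ∀ i ∈ s, d i = 0) :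
    monomial d (1 : K) ∉ inIdeal m J := by
  rw [hGB, monomial_mem_span_leadExp_iff]
  rintro ⟨g, hg, hle⟩
  obtain ⟨i, hi, hgi⟩ := mem_ideal_span_X_image.mp (hGs g hg) _ (m.degree_mem_support (hGs0 g hg))
  exact hgi (Nat.eq_zero_of_le_zero (hd i hi ▸ hle i))

end GroebnerBasis

namespace Paper

variable {K : Type} [Field K] {n m : ℕ}

variable (K n m) in
noncomputable def evalXZero : TT K n m →ₐ[K] MvPolynomial (Fin m) K :=
  aeval (Sum.elim 0 X)

theorem evalXZero_ymon (c : Fin m →₀ ℕ) : evalXZero K n m (ymon K n m c) = monomial c 1 := by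
  have : ymon K n m c = rename Sum.inr (monomial c 1) := by rw [rename_monomial]; rfl
  rw [this, evalXZero, aeval_rename, Sum.elim_comp_inr, aeval_X_left_apply]

theorem evalXZero_ιS (p : S K n) : evalXZero K n m (ιS K n m p) = C (constantCoeff p) := by
  rw [ιS, evalXZero, aeval_rename, Sum.elim_comp_inl, Pi.zero_def, aeval_zero']
  rfl

theorem evalXZero_eq_zero_of_mem {f : TT K n m}
    (hf : f ∈ Ideal.span (X '' Set.range Sum.inl)) : evalXZero K n m f = 0 := by
  have hker : Ideal.span (X '' Set.range Sum.inl) ≤ RingHom.ker (evalXZero K n m) :=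
    Ideal.span_le.mpr <| by rintro _ ⟨_, ⟨i, rfl⟩, rfl⟩; simp [evalXZero]
  exact hker hf

/-- Setting `x = 0` kills `I` and maps the `S`-span of the `y^{h i}` into their `K`-span. -/
theorem exists_eq_of_ymon_mem_span_sup {ι : Type*} (h : ι → Fin m →₀ ℕ) (t : Set ι)
    {I : Ideal (TT K n m)} (hI : I ≤ Ideal.span (X '' Set.range Sum.inl)) {d : Fin m →₀ ℕ}
    (hd : ymon K n m d ∈ Submodule.span (S K n) ((fun i => ymon K n m (h i)) '' t) ⊔
      (I : Submodule (TT K n m) (TT K n m)).restrictScalars (S K n)) :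
    ∃ i ∈ t, h i = d := by
  classical
  by_contra! hne
  have hspan : ∀ f ∈ Submodule.span (S K n) ((fun i => ymon K n m (h i)) '' t),
      coeff d (evalXZero K n m f) = 0 := by
    intro f hf
    induction hf using Submodule.span_induction with
    | mem f hf =>
      obtain ⟨i, hi, rfl⟩ := hf
      rw [evalXZero_ymon, coeff_monomial, if_neg (hne i hi)]
    | zero => simp
    | add f g _ _ hf hg => rw [map_add, coeff_add, hf, hg, add_zero]
    | smul p f _ hf =>
      rw [show p • f = ιS K n m p * f from Algebra.smul_def p f, map_mul, evalXZero_ιS,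
        coeff_C_mul, hf, mul_zero]
  obtain ⟨a, ha, b, hb, hab⟩ := Submodule.mem_sup.mp hd
  have hcoeff := congrArg (fun f => coeff d (evalXZero K n m f)) hab
  simp [hspan a ha, evalXZero_eq_zero_of_mem (hI hb), evalXZero_ymon] at hcoeff

theorem statement7_general (K : Type) [Field K] (n m : ℕ)
    (J : Ideal (TT K n m))
    (ord : MonomialOrder (Fin n ⊕ Fin m))
    (Gs : Set (TT K n m))
    -- `Gs` is the reduced Gröbner basis of `J` with respect to `<`
    (hGsJ : Gs ⊆ (J : Set (TT K n m)))
    (hGs0 : ∀ g ∈ Gs, g ≠ 0 ∧ MvPolynomial.coeff (leadExp ord g) g = 1)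
    (hGB : inIdeal ord J =
      Ideal.span ((fun g => monomial (leadExp ord g) (1 : K)) '' Gs))
    -- `𝒢 ⊆ (x_1,…,x_n) T`
    (hGx : ∀ g ∈ Gs, g ∈ Ideal.span (Set.range fun i : Fin n => (X (Sum.inl i) : TT K n m)))
    (k : ℕ)
    (s : ℕ) (H : Fin s → (Fin m →₀ ℕ))
    (hall : ∀ c : Fin m →₀ ℕ, ydeg m c = k → ymon K n m c ∉ inIdeal ord J → ∃ j, H j = c)
    (hinj : Function.Injective H) :
    -- the `h_j` generate `A_k` …
    (∀ c : Fin m →₀ ℕ, ydeg m c = k →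
      ymon K n m c ∈
        Submodule.span (S K n) (Set.range (fun j => ymon K n m (H j))) ⊔
          (J : Submodule (TT K n m) (TT K n m)).restrictScalars (S K n)) ∧
    -- … minimally
    (∀ j : Fin s,
      ymon K n m (H j) ∉
        Submodule.span (S K n) ((fun j' => ymon K n m (H j')) '' {i | i ≠ j}) ⊔
          (J : Submodule (TT K n m) (TT K n m)).restrictScalars (S K n)) := by
  have hGs0' : ∀ g ∈ Gs, g ≠ 0 := fun g hg => (hGs0 g hg).1
  have hGx' : ∀ g ∈ Gs, g ∈ Ideal.span (X '' Set.range Sum.inl) := by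
    rw [← Set.range_comp]; exact hGx
  refine ⟨fun c hc => ?_, fun j hj => ?_⟩
  · have hstd : ymon K n m c ∉ inIdeal ord J :=
      monomial_notMem_inIdeal_of_subset_span_X ord hGs0' hGB hGx' fun _ ⟨i, hi⟩ =>
        hi ▸ mapDomain_of_notMem_range _ _ (by simp)
    obtain ⟨j, rfl⟩ := hall c hc hstd
    exact Submodule.mem_sup_left (Submodule.subset_span ⟨j, rfl⟩)
  · have hJ : J ≤ Ideal.span (X '' Set.range Sum.inl) :=
      span_eq_of_inIdeal_eq ord hGsJ hGs0' hGB ▸ Ideal.span_le.mpr hGx'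
    obtain ⟨i, hij, hi⟩ := exists_eq_of_ymon_mem_span_sup H _ hJ hj
    exact hij (hinj hi)

/-- If the reduced Gröbner basis `𝒢` of `J` is contained in `(x_1,…,x_n)T`,
then for each `k ≥ 1` the classes of the standard monomials of `y`-degree `k` form a minimal
generating set of the `S`-module `A_k`. -/
theorem statement7 (K : Type) [Field K] (n m : ℕ)
    (dY : Fin m → ℕ) (J : Ideal (TT K n m))
    (ord : MonomialOrder (Fin n ⊕ Fin m))
    (ordY : MonomialOrder (Fin m)) (ordX : MonomialOrder (Fin n))
    (hcomp : ComparesYFirst ord ordY ordX)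
    (hbihom : IsBihomogIdeal K n m dY J)
    (hS : SInjectsModJ K n m J)
    (hx : XCondition ord J)
    (Gs : Set (TT K n m))
    -- `Gs` is the reduced Gröbner basis of `J` with respect to `<`
    (hGsJ : Gs ⊆ (J : Set (TT K n m)))
    (hGs0 : ∀ g ∈ Gs, g ≠ 0 ∧ MvPolynomial.coeff (leadExp ord g) g = 1)
    (hGB : inIdeal ord J =
      Ideal.span ((fun g => monomial (leadExp ord g) (1 : K)) '' Gs))
    (hred : ∀ g ∈ Gs, ∀ g' ∈ Gs, ∀ c ∈ g.support,
      leadExp ord g' ≤ c → g' = g ∧ c = leadExp ord g)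
    -- `𝒢 ⊆ (x_1,…,x_n) T`
    (hGx : ∀ g ∈ Gs, g ∈ Ideal.span (Set.range fun i : Fin n => (X (Sum.inl i) : TT K n m)))
    (k : ℕ) (hk : 1 ≤ k)
    (s : ℕ) (H : Fin s → (Fin m →₀ ℕ))
    (hdeg : ∀ j, ydeg m (H j) = k)
    (hstd : ∀ j, ymon K n m (H j) ∉ inIdeal ord J)
    (hall : ∀ c : Fin m →₀ ℕ, ydeg m c = k → ymon K n m c ∉ inIdeal ord J → ∃ j, H j = c)
    (hinj : Function.Injective H) :
    -- the `h_j` generate `A_k` …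
    (∀ c : Fin m →₀ ℕ, ydeg m c = k →
      ymon K n m c ∈
        Submodule.span (S K n) (Set.range (fun j => ymon K n m (H j))) ⊔
          (J : Submodule (TT K n m) (TT K n m)).restrictScalars (S K n)) ∧
    -- … minimally
    (∀ j : Fin s,
      ymon K n m (H j) ∉
        Submodule.span (S K n) ((fun j' => ymon K n m (H j')) '' {i | i ≠ j}) ⊔
          (J : Submodule (TT K n m) (TT K n m)).restrictScalars (S K n)) :=
  statement7_general K n m J ord Gs hGsJ hGs0 hGB hGx k s H hall hinj

end Paper
end

section
/- Let Γ_{p,q,r} = G_{p,q} ∪ G_{p,r} be the union of the complete graph on {x_1,...,x_p,y_1,...,y_q} and the complete graph on {x_1,...,x_p,z_1,...,z_r}. Then the toric (defining) ideal J of the Rees algebra of the vertex cover ideal I_{Γ_{p,q,r}} has a Gröbner basis, with respect to the described order, whose initial ideal is generated by the quadratic monomials x_i φ_i (1 ≤ i ≤ p), y_j ψ_j^k (1 ≤ j < q, 1 ≤ k ≤ r), z_k ψ_j^k (1 ≤ j ≤ q, 1 < k ≤ r), and ψ_{j_1}^{k_2} ψ_{j_2}^{k_1} (j_1 < j_2,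 k_1 < k_2). In particular J satisfies the x-condition. -/
open MvPolynomial Finsupp

namespace Paper

open MvPolynomial Finsupp

variable (K : Type) [Field K] (p q r : ℕ)

/-- The vertices of the biclique graph `Γ_{p,q,r}`: `x_1,…,x_p, y_1,…,y_q, z_1,…,z_r`. -/
abbrev σB := Fin p ⊕ (Fin q ⊕ Fin r)

/-- The variables `φ_1,…,φ_p, ψ_1^1,…,ψ_q^r` of the Rees presentation. -/
abbrev σφψ := Fin p ⊕ (Fin q × Fin r)

/-- The polynomial ring `S` on the vertices of `Γ_{p,q,r}`. -/
abbrev SB := MvPolynomial (σB p q r) K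

/-- The presentation ring `T` of the Rees algebra. -/
abbrev TB := MvPolynomial (σB p q r ⊕ σφψ p q r) K

/-- The vertex cover generator `g_i = (x/x_i)·y·z`. -/
noncomputable def gB (i : Fin p) : SB K p q r :=
  ((Finset.univ.erase i).prod fun i' => X (Sum.inl i')) *
  ((Finset.univ.prod fun j : Fin q => X (Sum.inr (Sum.inl j))) *
    (Finset.univ.prod fun k : Fin r => X (Sum.inr (Sum.inr k))))

/-- The vertex cover generator `f_j^k = x·(y/y_j)·(z/z_k)`. -/
noncomputable def fB (jk : Fin q × Fin r) : SB K p q r :=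
  (Finset.univ.prod fun i : Fin p => X (Sum.inl i)) *
  (((Finset.univ.erase jk.1).prod fun j' => X (Sum.inr (Sum.inl j'))) *
    ((Finset.univ.erase jk.2).prod fun k' => X (Sum.inr (Sum.inr k'))))

/-- The presentation `π : T → R(I_{Γ_{p,q,r}}) ⊆ S[t]` of the Rees algebra. -/
noncomputable def πB : TB K p q r →ₐ[K] Polynomial (SB K p q r) :=
  aeval (Sum.elim (fun v => Polynomial.C (X v))
    (Sum.elim (fun i => Polynomial.C (gB K p q r i) * Polynomial.X)
      (fun jk => Polynomial.C (fB K p q r jk) * Polynomial.X)))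

/-- The toric ideal `J_{Γ_{p,q,r}}`. -/
noncomputable def JB : Ideal (TB K p q r) := RingHom.ker (πB K p q r).toRingHom

/-- Priority for the lexicographic order
`φ_1 > … > φ_p > ψ_1^r > … > ψ_1^1 > ψ_2^r > … > ψ_q^1`. -/
def prioPhiPsi : σφψ p q r → σφψ p q r → Prop := fun v w =>
  match v, w with
  | .inl a, .inl b => a < b
  | .inl _, .inr _ => True
  | .inr _, .inl _ => False
  | .inr jk, .inr jk' => jk.1 < jk'.1 ∨ (jk.1 = jk'.1 ∧ jk'.2 < jk.2)

/-- Priority for the lexicographic order `y_q > … > y_1 > z_1 > … > z_r > x_p > … > x_1`. -/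
def prioXYZ : σB p q r → σB p q r → Prop := fun v w =>
  match v, w with
  | .inr (.inl j), .inr (.inl j') => j' < j
  | .inr (.inl _), .inr (.inr _) => True
  | .inr (.inl _), .inl _ => True
  | .inr (.inr k), .inr (.inr k') => k < k'
  | .inr (.inr _), .inl _ => True
  | .inr (.inr _), .inr (.inl _) => False
  | .inl i, .inl i' => i' < i
  | .inl _, _ => False

end Paper

/-!
`J` is the toric ideal of the monomial map sending each variable of `T` to the exponent of its
image in `K[t, x, y, z]`. For such an ideal, the initial ideal is spanned by a set `G` of monomials
as soon as (i) every element of `G` is the leading monomial of a binomial of `J`, and (ii) every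
fiber of the monomial map contains at most one exponent divisible by no element of `G`. Indeed,
(i) lets one lower any non-standard exponent inside its fiber, so by (ii) the standard exponent is
the least one of its fiber; and the leading exponent of an element of `J` shares its fiber with
another exponent of its support, hence is not standard.

For the quadrics `x_i φ_i`, `y_j ψ_j^k`, `z_k ψ_j^k`, `ψ_{j₁}^{k₂} ψ_{j₂}^{k₁}`, (i) is a direct
computation. For (ii), the fiber of a standard exponent determines its `x`- and `φ`-parts, the row
and column sums of its `ψ`-matrix and its `y`- and `z`-parts; and the `ψ`-matrix has no nonzero
entries in north-east/south-west position, so it is determined by its margins: each north-west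
rectangle sum of such a matrix is the minimum of the corresponding row and column totals.
-/

namespace MvPolynomial

variable {R : Type*} [CommSemiring R] {σ τ : Type*}

noncomputable def monomialMap (W : σ → τ →₀ ℕ) : MvPolynomial σ R →ₐ[R] MvPolynomial τ R :=
  aeval fun u => monomial (W u) 1

theorem monomialMap_monomial (W : σ → τ →₀ ℕ) (e : σ →₀ ℕ) (c : R) :
    monomialMap W (monomial e c) = monomial (linearCombination ℕ W e) c := by
  rw [monomialMap, aeval_monomial, linearCombination_apply, monomial_finsupp_sum_index]
  simp [monomial_pow]

theorem coeff_monomialMap [DecidableEq τ] (W : σ → τ →₀ ℕ) (f : MvPolynomial σ R)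
    (a : τ →₀ ℕ) :
    coeff a (monomialMap W f) = ∑ e ∈ f.support with linearCombination ℕ W e = a, coeff e f := by
  conv_lhs => rw [f.as_sum]
  simp only [map_sum, monomialMap_monomial, coeff_sum, coeff_monomial, Finset.sum_filter]

theorem exists_ne_mem_support_of_monomialMap_eq_zero {W : σ → τ →₀ ℕ} {f : MvPolynomial σ R}
    (hf : monomialMap W f = 0) {e : σ →₀ ℕ} (he : e ∈ f.support) :
    ∃ e' ∈ f.support, e' ≠ e ∧ linearCombination ℕ W e' = linearCombination ℕ W e := by
  classical
  by_contra! h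
  have hcoeff := coeff_monomialMap W f (linearCombination ℕ W e)
  rw [hf, coeff_zero, Finset.sum_eq_single_of_mem e (by simp [he])
    fun e' he' hne => absurd (Finset.mem_filter.mp he').2 (h e' (Finset.mem_filter.mp he').1 hne)]
    at hcoeff
  exact mem_support_iff.mp he hcoeff.symm

theorem monomial_sub_monomial_mem_ker_monomialMap {R : Type*} [CommRing R] {W : σ → τ →₀ ℕ}
    {c d : σ →₀ ℕ} (h : linearCombination ℕ W c = linearCombination ℕ W d) :
    monomial c (1 : R) - monomial d 1 ∈ RingHom.ker (monomialMap (R := R) W) := by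
  simp [RingHom.mem_ker, monomialMap_monomial, h]

theorem prod_X_eq_monomial {ι : Type*} (s : Finset ι) (f : ι → σ) :
    ∏ a ∈ s, (X (f a) : MvPolynomial σ R) = monomial (∑ a ∈ s, single (f a) 1) 1 := by
  rw [monomial_sum_one]
  rfl

end MvPolynomial

section StandardExponents

open MvPolynomial

variable {σ : Type*}

def IsStandardExp (G : Set (σ →₀ ℕ)) (e : σ →₀ ℕ) : Prop :=
  ∀ c ∈ G, ¬c ≤ e

theorem exists_le_of_not_isStandardExp {G : Set (σ →₀ ℕ)} {e : σ →₀ ℕ}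
    (h : ¬IsStandardExp G e) : ∃ c ∈ G, c ≤ e := by
  simpa [IsStandardExp] using h

theorem leadExp_eq_degree {K : Type} [Field K] (m : MonomialOrder σ) (f : MvPolynomial σ K) :
    leadExp m f = m.degree f :=
  rfl

variable {M : Type*} [AddCommMonoid M] (m : MonomialOrder σ) {G : Set (σ →₀ ℕ)}

theorem toSyn_lt_of_isStandardExp (w : (σ →₀ ℕ) →+ M)
    (hG : ∀ c ∈ G, ∃ d, w d = w c ∧ m.toSyn d < m.toSyn c)
    (huniq : ∀ e e', IsStandardExp G e → IsStandardExp G e' → w e = w e' → e = e')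
    {e : σ →₀ ℕ} (he : IsStandardExp G e) (e' : σ →₀ ℕ) (hw : w e' = w e) (hne : e' ≠ e) :
    m.toSyn e < m.toSyn e' := by
  induction e' using (InvImage.wf m.toSyn wellFounded_lt).induction with
  | _ e' ih =>
  by_cases he' : IsStandardExp G e'
  · exact absurd (huniq e' e he' he hw) hne
  obtain ⟨c, hc, hce'⟩ := exists_le_of_not_isStandardExp he'
  obtain ⟨d, hdc, hdc_lt⟩ := hG c hc
  have hlt : m.toSyn (e' - c + d) < m.toSyn e' := by
    conv_rhs => rw [← tsub_add_cancel_of_le hce']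
    simpa only [map_add] using add_lt_add_right hdc_lt (m.toSyn (e' - c))
  have hw' : w (e' - c + d) = w e := by
    rw [map_add, hdc, ← map_add, tsub_add_cancel_of_le hce', hw]
  by_cases heq : e' - c + d = e
  · exact heq ▸ hlt
  · exact (ih _ hlt hw' heq).trans hlt

theorem inIdeal_ker_monomialMap {K : Type} [Field K] {τ : Type*} (W : σ → τ →₀ ℕ)
    (hG : ∀ c ∈ G, ∃ d, linearCombination ℕ W d = linearCombination ℕ W c ∧
      m.toSyn d < m.toSyn c)
    (huniq : ∀ e e', IsStandardExp G e → IsStandardExp G e' →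
      linearCombination ℕ W e = linearCombination ℕ W e' → e = e') :
    inIdeal m (RingHom.ker (monomialMap (R := K) W)) =
      Ideal.span ((fun c => monomial c (1 : K)) '' G) := by
  apply le_antisymm
  · rw [inIdeal, Ideal.span_le]
    rintro _ ⟨f, ⟨hfJ, hf0⟩, rfl⟩
    simp only [SetLike.mem_coe, leadExp_eq_degree]
    obtain ⟨e', he', hne, hw⟩ :=
      exists_ne_mem_support_of_monomialMap_eq_zero hfJ (m.degree_mem_support hf0)
    have hnstd : ¬IsStandardExp G (m.degree f) := fun hstd =>
      (toSyn_lt_of_isStandardExp m (linearCombination ℕ W).toAddMonoidHom hG huniq hstd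
        e' hw hne).not_ge (m.le_degree he')
    obtain ⟨c, hc, hcle⟩ := exists_le_of_not_isStandardExp hnstd
    have hsplit : monomial (m.degree f) (1 : K) = monomial (m.degree f - c) 1 * monomial c 1 := by
      rw [monomial_mul, one_mul, tsub_add_cancel_of_le hcle]
    rw [hsplit]
    exact Ideal.mul_mem_left _ _ (Ideal.subset_span ⟨c, hc, rfl⟩)
  · rw [Ideal.span_le]
    rintro _ ⟨c, hc, rfl⟩
    obtain ⟨d, hdc, hlt⟩ := hG c hc
    have hdc_ne : monomial c (1 : K) ≠ monomial d 1 :=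
      (monomial_left_injective one_ne_zero).ne (by rintro rfl; exact hlt.false)
    have hdeg : m.degree (monomial c (1 : K) - monomial d 1) = c := by
      classical
      rw [m.degree_sub_of_lt] <;> simp only [m.degree_monomial, one_ne_zero, if_false, hlt]
    refine Ideal.subset_span ⟨monomial c 1 - monomial d 1,
      ⟨monomial_sub_monomial_mem_ker_monomialMap hdc.symm, sub_ne_zero.mpr hdc_ne⟩, ?_⟩
    simp only [leadExp_eq_degree, hdeg]

end StandardExponents

section Staircase

open Finset

variable {ι κ : Type*} [Fintype ι] [Fintype κ] [LinearOrder ι] [LinearOrder κ]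

def IsStaircase (b : ι → κ → ℕ) : Prop :=
  ∀ ⦃j₁ j₂ : ι⦄ ⦃k₁ k₂ : κ⦄, j₁ < j₂ → k₁ < k₂ → b j₁ k₂ = 0 ∨ b j₂ k₁ = 0

theorem IsStaircase.sum_sum_eq_min {b : ι → κ → ℕ} (hb : IsStaircase b) {A : Finset ι}
    {B : Finset κ} (hA : IsLowerSet (A : Set ι)) (hB : IsLowerSet (B : Set κ)) :
    ∑ j ∈ A, ∑ k ∈ B, b j k = min (∑ j ∈ A, ∑ k, b j k) (∑ k ∈ B, ∑ j, b j k) := by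
  have hrows : ∑ j ∈ A, ∑ k ∈ B, b j k ≤ ∑ j ∈ A, ∑ k, b j k :=
    sum_le_sum fun j _ => sum_le_sum_of_subset (subset_univ B)
  have hcols : ∑ j ∈ A, ∑ k ∈ B, b j k ≤ ∑ k ∈ B, ∑ j, b j k := by
    rw [Finset.sum_comm]
    exact sum_le_sum fun k _ => sum_le_sum_of_subset (subset_univ A)
  by_cases hAB : ∃ j ∈ A, ∃ k ∉ B, b j k ≠ 0
  · obtain ⟨j, hj, k, hk, hjk⟩ := hAB
    -- a nonzero entry right of `B` in a row of `A` forces zeros below `A` in the columns of `B`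
    have hBA : ∀ k' ∈ B, ∀ j' ∉ A, b j' k' = 0 := fun k' hk' j' hj' =>
      (hb (lt_of_not_ge fun h => hj' (hA h hj))
        (lt_of_not_ge fun h => hk (hB h hk'))).resolve_left hjk
    have : ∑ k ∈ B, ∑ j, b j k = ∑ j ∈ A, ∑ k ∈ B, b j k := by
      conv_rhs => rw [Finset.sum_comm]
      exact Finset.sum_congr rfl fun k hk =>
        (sum_subset (subset_univ A) fun j _ hj => hBA k hk j hj).symm
    omega
  · push Not at hAB
    have : ∑ j ∈ A, ∑ k, b j k = ∑ j ∈ A, ∑ k ∈ B, b j k :=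
      Finset.sum_congr rfl fun j hj =>
        (sum_subset (subset_univ B) fun k _ hk => hAB j hj k hk).symm
    omega

theorem IsStaircase.eq_of_sum_eq [LocallyFiniteOrderBot ι] [LocallyFiniteOrderBot κ]
    {b b' : ι → κ → ℕ} (hb : IsStaircase b) (hb' : IsStaircase b')
    (hrow : ∀ j, ∑ k, b j k = ∑ k, b' j k) (hcol : ∀ k, ∑ j, b j k = ∑ j, b' j k) : b = b' := by
  have hrect : ∀ {A : Finset ι} {B : Finset κ}, IsLowerSet (A : Set ι) →
      IsLowerSet (B : Set κ) → ∑ j ∈ A, ∑ k ∈ B, b j k = ∑ j ∈ A, ∑ k ∈ B, b' j k :=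
    fun hA hB => by simp only [hb.sum_sum_eq_min hA hB, hb'.sum_sum_eq_min hA hB, hrow, hcol]
  funext J K
  -- inclusion–exclusion over the north-west rectangles with corner `(J, K)`
  have hcorner : ∀ c : ι → κ → ℕ,
      ∑ j ∈ Iic J, ∑ k ∈ Iic K, c j k + ∑ j ∈ Iio J, ∑ k ∈ Iio K, c j k =
        ∑ j ∈ Iio J, ∑ k ∈ Iic K, c j k + ∑ j ∈ Iic J, ∑ k ∈ Iio K, c j k + c J K := by
    intro c
    simp only [← Iio_insert, sum_insert notMem_Iio_self, sum_add_distrib]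
    ring
  have h := hcorner b
  have h' := hcorner b'
  have hJ : IsLowerSet ((Iic J : Finset ι) : Set ι) := by simpa using isLowerSet_Iic J
  have hJ' : IsLowerSet ((Iio J : Finset ι) : Set ι) := by simpa using isLowerSet_Iio J
  have hK : IsLowerSet ((Iic K : Finset κ) : Set κ) := by simpa using isLowerSet_Iic K
  have hK' : IsLowerSet ((Iio K : Finset κ) : Set κ) := by simpa using isLowerSet_Iio K
  rw [hrect hJ hK, hrect hJ' hK', hrect hJ' hK, hrect hJ hK'] at h
  omega

end Staircase

theorem Fintype.sum_ite_eq_zero_add {α M : Type*} [Fintype α] [DecidableEq α] [AddCommMonoid M]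
    (a : α) (f : α → M) : (∑ x, if a = x then 0 else f x) + f a = ∑ x, f x := by
  rw [← Fintype.sum_ite_eq a f, ← Finset.sum_add_distrib]
  exact Finset.sum_congr rfl fun x _ => by split_ifs <;> simp

theorem eq_of_add_eq_add_of_forall_ne {ι : Type*} [Fintype ι] {a b a' b' w : ι → ℕ} {T : ℕ}
    (j₀ : ι) (h : ∀ j, w j + b j = a j + T) (h' : ∀ j, w j + b' j = a' j + T)
    (hab : ∀ j ≠ j₀, a j = 0 ∨ b j = 0) (hab' : ∀ j ≠ j₀, a' j = 0 ∨ b' j = 0)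
    (hsum : ∑ j, b j = ∑ j, b' j) : a = a' ∧ b = b' := by
  classical
  have hne : ∀ j ≠ j₀, b j = b' j := fun j hj => by
    have := h j
    have := h' j
    rcases hab j hj with _ | _ <;> rcases hab' j hj with _ | _ <;> omega
  have hb : b = b' := by
    funext j
    by_cases hj : j = j₀
    · subst hj
      rw [← Finset.add_sum_erase _ _ (Finset.mem_univ j),
        ← Finset.add_sum_erase _ _ (Finset.mem_univ j),
        Finset.sum_congr rfl fun i hi => hne i (Finset.ne_of_mem_erase hi)] at hsum
      exact add_right_cancel hsum
    · exact hne j hj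
  refine ⟨funext fun j => ?_, hb⟩
  have := h j
  have := h' j
  rw [← hb] at this
  omega

theorem Finsupp.single_add_single_le {α : Type*} {a b : α} (hab : a ≠ b) {e : α →₀ ℕ}
    (ha : e a ≠ 0) (hb : e b ≠ 0) : single a 1 + single b 1 ≤ e := by
  classical
  intro s
  simp only [Finsupp.add_apply, Finsupp.single_apply]
  split_ifs <;> subst_vars <;> simp_all [Nat.one_le_iff_ne_zero]

namespace Paper

variable {p q r : ℕ}

-- The exponent of `πB (X u)` in `K[t, x, y, z]`, the coordinate `none` standing for `t`.
noncomputable def reesWeight : σB p q r ⊕ σφψ p q r → Option (σB p q r) →₀ ℕ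
  | .inl v => single (some v) 1
  | .inr (.inl i) => equivFunOnFinite.symm fun o => if o = some (.inl i) then 0 else 1
  | .inr (.inr (j, k)) => equivFunOnFinite.symm fun o =>
      if o = some (.inr (.inl j)) ∨ o = some (.inr (.inr k)) then 0 else 1

noncomputable abbrev reesExp :
    ((σB p q r ⊕ σφψ p q r) →₀ ℕ) →ₗ[ℕ] Option (σB p q r) →₀ ℕ :=
  linearCombination ℕ reesWeight

section Presentation

variable (K : Type) [Field K]

theorem gB_eq_monomial (i : Fin p) :
    gB K p q r i = monomial (reesWeight (.inr (.inl i))).some 1 := by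
  rw [gB, prod_X_eq_monomial, prod_X_eq_monomial, prod_X_eq_monomial, monomial_mul, monomial_mul,
    one_mul, one_mul]
  refine congrArg (monomial · (1 : K)) ?_
  ext (_ | _ | _) <;> simp [reesWeight, single_apply]

theorem fB_eq_monomial (jk : Fin q × Fin r) :
    fB K p q r jk = monomial (reesWeight (.inr (.inr jk))).some 1 := by
  rw [fB, prod_X_eq_monomial, prod_X_eq_monomial, prod_X_eq_monomial, monomial_mul, monomial_mul,
    one_mul, one_mul]
  refine congrArg (monomial · (1 : K)) ?_
  ext (_ | _ | _) <;> simp [reesWeight, single_apply]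

theorem πB_eq_comp_monomialMap :
    πB K p q r = (optionEquivLeft K (σB p q r)).toAlgHom.comp (monomialMap reesWeight) := by
  refine algHom_ext fun u => ?_
  rcases u with v | i | jk
  · simp only [πB, monomialMap, reesWeight, AlgHom.coe_comp, Function.comp_apply, aeval_X,
      Sum.elim_inl]
    exact (optionEquivLeft_X_some (R := K) (x := v)).symm
  · simp [πB, monomialMap, reesWeight, optionEquivLeft_monomial, gB_eq_monomial,
      Polynomial.C_mul_X_eq_monomial]
  · simp [πB, monomialMap, reesWeight, optionEquivLeft_monomial, fB_eq_monomial,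
      Polynomial.C_mul_X_eq_monomial]

theorem JB_eq_ker_monomialMap : JB K p q r = RingHom.ker (monomialMap (R := K) reesWeight) := by
  ext f
  simp [JB, RingHom.mem_ker, πB_eq_comp_monomialMap]

theorem monomial_sub_monomial_mem_JB {c d : (σB p q r ⊕ σφψ p q r) →₀ ℕ}
    (h : reesExp c = reesExp d) : monomial c (1 : K) - monomial d 1 ∈ JB K p q r :=
  JB_eq_ker_monomialMap K ▸ monomial_sub_monomial_mem_ker_monomialMap h

end Presentation

theorem reesWeight_x_add_φ (i : Fin p) (j : Fin q) (k : Fin r) :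
    reesWeight (.inl (.inl i)) + reesWeight (.inr (.inl i)) =
      reesWeight (.inl (.inr (.inl j))) + (reesWeight (.inl (.inr (.inr k))) +
        reesWeight (p := p) (.inr (.inr (j, k)))) := by
  ext (_ | _ | _ | _) <;> simp [reesWeight, single_apply] <;> split_ifs <;> omega

theorem reesWeight_y_add_ψ (j j' : Fin q) (k : Fin r) :
    reesWeight (.inl (.inr (.inl j))) + reesWeight (.inr (.inr (j, k))) =
      reesWeight (.inl (.inr (.inl j'))) + reesWeight (p := p) (.inr (.inr (j', k))) := by
  ext (_ | _ | _ | _) <;> simp [reesWeight, single_apply]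
  split_ifs <;> omega

theorem reesWeight_z_add_ψ (j : Fin q) (k k' : Fin r) :
    reesWeight (.inl (.inr (.inr k))) + reesWeight (.inr (.inr (j, k))) =
      reesWeight (.inl (.inr (.inr k'))) + reesWeight (p := p) (.inr (.inr (j, k'))) := by
  ext (_ | _ | _ | _) <;> simp [reesWeight, single_apply]
  split_ifs <;> omega

theorem reesWeight_ψ_add_ψ (j j' : Fin q) (k k' : Fin r) :
    reesWeight (.inr (.inr (j, k'))) + reesWeight (.inr (.inr (j', k))) =
      reesWeight (.inr (.inr (j, k))) + reesWeight (p := p) (.inr (.inr (j', k'))) := by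
  ext (_ | _ | _ | _) <;> simp [reesWeight]
  split_ifs <;> omega

def quadExps (yL : Fin q) (z0 : Fin r) : Set ((σB p q r ⊕ σφψ p q r) →₀ ℕ) :=
  {c | (∃ i : Fin p,
          c = Finsupp.single (Sum.inl (Sum.inl i)) 1 +
              Finsupp.single (Sum.inr (Sum.inl i)) 1) ∨
       (∃ (j : Fin q) (k : Fin r), j ≠ yL ∧
          c = Finsupp.single (Sum.inl (Sum.inr (Sum.inl j))) 1 +
              Finsupp.single (Sum.inr (Sum.inr (j, k))) 1) ∨
       (∃ (j : Fin q) (k : Fin r), k ≠ z0 ∧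
          c = Finsupp.single (Sum.inl (Sum.inr (Sum.inr k))) 1 +
              Finsupp.single (Sum.inr (Sum.inr (j, k))) 1) ∨
       (∃ (j₁ j₂ : Fin q) (k₁ k₂ : Fin r), j₁ < j₂ ∧ k₁ < k₂ ∧
          c = Finsupp.single (Sum.inr (Sum.inr (j₁, k₂))) 1 +
              Finsupp.single (Sum.inr (Sum.inr (j₂, k₁))) 1)}

variable {yL : Fin q} {z0 : Fin r}

theorem sum_inl_le_one_of_mem_quadExps {c : (σB p q r ⊕ σφψ p q r) →₀ ℕ}
    (hc : c ∈ quadExps yL z0) : ∑ v : σB p q r, c (.inl v) ≤ 1 := by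
  rcases hc with ⟨i, rfl⟩ | ⟨j, k, -, rfl⟩ | ⟨j, k, -, rfl⟩ | ⟨j₁, j₂, k₁, k₂, -, -, rfl⟩ <;>
    simp [single_apply]

theorem exists_reesExp_eq_toSyn_lt_of_mem_quadExps (ord : MonomialOrder (σB p q r ⊕ σφψ p q r))
    (hord : ∀ c d, lexLt (prioPhiPsi p q r) (yPart c) (yPart d) → ord.toSyn c < ord.toSyn d)
    (hyL : ∀ j, j ≤ yL) (hz0 : ∀ k, z0 ≤ k) {c : (σB p q r ⊕ σφψ p q r) →₀ ℕ}
    (hc : c ∈ quadExps yL z0) : ∃ d, reesExp d = reesExp c ∧ ord.toSyn d < ord.toSyn c := by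
  rcases hc with ⟨i, rfl⟩ | ⟨j, k, hj, rfl⟩ | ⟨j, k, hk, rfl⟩ | ⟨j₁, j₂, k₁, k₂, hj, hk, rfl⟩
  · refine ⟨single (.inl (.inr (.inl yL))) 1 + (single (.inl (.inr (.inr z0))) 1 +
      single (.inr (.inr (yL, z0))) 1), by simp [reesWeight_x_add_φ i yL z0], hord _ _ ?_⟩
    refine ⟨.inl i, by simp [yPart], ?_⟩
    rintro (a | jk) hw <;> simp [yPart, single_apply, prioPhiPsi] at hw ⊢
    omega
  · refine ⟨single (.inl (.inr (.inl yL))) 1 + single (.inr (.inr (yL, k))) 1,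
      by simp [reesWeight_y_add_ψ j yL k], hord _ _ ?_⟩
    have := lt_of_le_of_ne (hyL j) hj
    refine ⟨.inr (j, k), by simp [yPart, hj.symm], ?_⟩
    rintro (a | ⟨j', k'⟩) hw <;> simp [yPart, single_apply, prioPhiPsi] at hw ⊢
    split_ifs <;> omega
  · refine ⟨single (.inl (.inr (.inr z0))) 1 + single (.inr (.inr (j, z0))) 1,
      by simp [reesWeight_z_add_ψ j k z0], hord _ _ ?_⟩
    have := lt_of_le_of_ne (hz0 k) hk.symm
    refine ⟨.inr (j, k), by simp [yPart, hk], ?_⟩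
    rintro (a | ⟨j', k'⟩) hw <;> simp [yPart, single_apply, prioPhiPsi] at hw ⊢
    split_ifs <;> omega
  · refine ⟨single (.inr (.inr (j₁, k₁))) 1 + single (.inr (.inr (j₂, k₂))) 1,
      by simp [reesWeight_ψ_add_ψ j₁ j₂ k₁ k₂], hord _ _ ?_⟩
    refine ⟨.inr (j₁, k₂), by simp [yPart, hj.ne, hk.ne'], ?_⟩
    rintro (a | ⟨j', k'⟩) hw <;> simp [yPart, single_apply, prioPhiPsi] at hw ⊢
    split_ifs <;> omega

section Uniqueness

theorem reesExp_apply (e : (σB p q r ⊕ σφψ p q r) →₀ ℕ) (o : Option (σB p q r)) :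
    reesExp e o = ∑ u, e u * reesWeight u o := by
  rw [reesExp, linearCombination_apply, sum_fintype _ _ (by simp), finsetSum_apply]
  simp

theorem reesExp_apply_none (e : (σB p q r ⊕ σφψ p q r) →₀ ℕ) :
    reesExp e none = ∑ i, e (.inr (.inl i)) + ∑ j, ∑ k, e (.inr (.inr (j, k))) := by
  simp [reesExp_apply, Fintype.sum_sum_type, Fintype.sum_prod_type, reesWeight]

theorem reesExp_apply_x (e : (σB p q r ⊕ σφψ p q r) →₀ ℕ) (i : Fin p) :
    reesExp e (some (.inl i)) + e (.inr (.inl i)) = e (.inl (.inl i)) + reesExp e none := by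
  simp [reesExp_apply, Fintype.sum_sum_type, Fintype.sum_prod_type, reesWeight, single_apply]
  have := Fintype.sum_ite_eq_zero_add i fun x => e (.inr (.inl x))
  omega

theorem reesExp_apply_y (e : (σB p q r ⊕ σφψ p q r) →₀ ℕ) (j : Fin q) :
    reesExp e (some (.inr (.inl j))) + ∑ k, e (.inr (.inr (j, k))) =
      e (.inl (.inr (.inl j))) + reesExp e none := by
  simp [reesExp_apply, Fintype.sum_sum_type, Fintype.sum_prod_type, reesWeight, single_apply]
  have hrow : ∀ x, (∑ k, if j = x then 0 else e (.inr (.inr (x, k)))) =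
      if j = x then 0 else ∑ k, e (.inr (.inr (x, k))) := fun x => by split_ifs <;> simp
  have := Fintype.sum_ite_eq_zero_add j fun x => ∑ k, e (.inr (.inr (x, k)))
  simp only [hrow]
  omega

theorem reesExp_apply_z (e : (σB p q r ⊕ σφψ p q r) →₀ ℕ) (k : Fin r) :
    reesExp e (some (.inr (.inr k))) + ∑ j, e (.inr (.inr (j, k))) =
      e (.inl (.inr (.inr k))) + reesExp e none := by
  simp [reesExp_apply, Fintype.sum_sum_type, Fintype.sum_prod_type, reesWeight, single_apply]
  have : (∑ j, ∑ x, if k = x then 0 else e (.inr (.inr (j, x)))) + ∑ j, e (.inr (.inr (j, k))) =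
      ∑ j, ∑ x, e (.inr (.inr (j, x))) := by
    rw [← Finset.sum_add_distrib]
    exact Finset.sum_congr rfl fun j _ => Fintype.sum_ite_eq_zero_add k _
  omega

variable {e e' : (σB p q r ⊕ σφψ p q r) →₀ ℕ}

theorem support_conditions_of_isStandardExp_quadExps (he : IsStandardExp (quadExps yL z0) e) :
    (∀ i, e (.inl (.inl i)) = 0 ∨ e (.inr (.inl i)) = 0) ∧
    (∀ j ≠ yL, e (.inl (.inr (.inl j))) = 0 ∨ ∑ k, e (.inr (.inr (j, k))) = 0) ∧
    (∀ k ≠ z0, e (.inl (.inr (.inr k))) = 0 ∨ ∑ j, e (.inr (.inr (j, k))) = 0) ∧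
    IsStaircase fun j k => e (.inr (.inr (j, k))) := by
  refine ⟨fun i => ?_, fun j hj => ?_, fun k hk => ?_, fun j₁ j₂ k₁ k₂ hj hk => ?_⟩
  · by_contra! h
    exact he _ (Or.inl ⟨i, rfl⟩) (single_add_single_le (by simp) h.1 h.2)
  · by_contra! h
    obtain ⟨k, -, hk⟩ := Finset.exists_ne_zero_of_sum_ne_zero h.2
    exact he _ (Or.inr (Or.inl ⟨j, k, hj, rfl⟩)) (single_add_single_le (by simp) h.1 hk)
  · by_contra! h
    obtain ⟨j, -, hj⟩ := Finset.exists_ne_zero_of_sum_ne_zero h.2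
    exact he _ (Or.inr (Or.inr (Or.inl ⟨j, k, hk, rfl⟩))) (single_add_single_le (by simp) h.1 hj)
  · by_contra! h
    exact he _ (Or.inr (Or.inr (Or.inr ⟨j₁, j₂, k₁, k₂, hj, hk, rfl⟩)))
      (single_add_single_le (by simp [hj.ne]) h.1 h.2)

theorem eq_of_reesExp_eq_of_isStandardExp_quadExps (he : IsStandardExp (quadExps yL z0) e)
    (he' : IsStandardExp (quadExps yL z0) e') (h : reesExp e = reesExp e') : e = e' := by
  obtain ⟨hx, hy, hz, hψ⟩ := support_conditions_of_isStandardExp_quadExps he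
  obtain ⟨hx', hy', hz', hψ'⟩ := support_conditions_of_isStandardExp_quadExps he'
  have hxφ : ∀ i, e (.inl (.inl i)) = e' (.inl (.inl i)) ∧
      e (.inr (.inl i)) = e' (.inr (.inl i)) := fun i => by
    have h₁ := reesExp_apply_x e i
    have h₂ := reesExp_apply_x e' i
    rw [← h] at h₂
    rcases hx i with _ | _ <;> rcases hx' i with _ | _ <;> omega
  have hψ_total : ∑ j, ∑ k, e (.inr (.inr (j, k))) = ∑ j, ∑ k, e' (.inr (.inr (j, k))) := by
    have h₁ := reesExp_apply_none e
    have h₂ := reesExp_apply_none e'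
    have hφ : ∑ i, e (.inr (.inl i)) = ∑ i, e' (.inr (.inl i)) :=
      Finset.sum_congr rfl fun i _ => (hxφ i).2
    rw [← h] at h₂
    omega
  obtain ⟨hy_eq, hrow⟩ := eq_of_add_eq_add_of_forall_ne yL (reesExp_apply_y e)
    (fun j => h ▸ reesExp_apply_y e' j) hy hy' hψ_total
  obtain ⟨hz_eq, hcol⟩ := eq_of_add_eq_add_of_forall_ne z0 (reesExp_apply_z e)
    (fun k => h ▸ reesExp_apply_z e' k) hz hz'
    (by rw [Finset.sum_comm, hψ_total, Finset.sum_comm])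
  have hψ_eq := hψ.eq_of_sum_eq hψ' (congrFun hrow) (congrFun hcol)
  ext ((i | j | k) | (i | ⟨j, k⟩))
  · exact (hxφ i).1
  · exact congrFun hy_eq j
  · exact congrFun hz_eq k
  · exact (hxφ i).2
  · exact congrFun₂ hψ_eq j k

end Uniqueness

/-- The toric ideal of the Rees algebra of the vertex cover ideal of the
biclique graph `Γ_{p,q,r}` has a quadratic Gröbner basis with respect to the described order:
the listed binomials lie in `J`, the initial ideal is generated by the listed quadratic
monomials, and in particular `J` satisfies the x-condition. -/
theorem statement16 (K : Type) [Field K] (p q r : ℕ)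
    (hq : 0 < q) (hr : 0 < r)
    (ord : MonomialOrder (σB p q r ⊕ σφψ p q r))
    (hord : ∀ c d : (σB p q r ⊕ σφψ p q r) →₀ ℕ,
      ord.toSyn c < ord.toSyn d ↔
        (lexLt (prioPhiPsi p q r) (yPart c) (yPart d) ∨
          (yPart c = yPart d ∧ lexLt (prioXYZ p q r) (xPart c) (xPart d)))) :
    let yL : Fin q := ⟨q - 1, by omega⟩
    let z0 : Fin r := ⟨0, hr⟩
    let xv : σB p q r → TB K p q r := fun v => X (Sum.inl v)
    let φv : Fin p → TB K p q r := fun i => X (Sum.inr (Sum.inl i))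
    let ψv : Fin q × Fin r → TB K p q r := fun jk => X (Sum.inr (Sum.inr jk))
    -- the Gröbner basis binomials lie in `J`
    (∀ i : Fin p,
      xv (Sum.inl i) * φv i -
        xv (Sum.inr (Sum.inl yL)) * xv (Sum.inr (Sum.inr z0)) * ψv (yL, z0) ∈ JB K p q r) ∧
    (∀ (j : Fin q) (k : Fin r), j ≠ yL →
      xv (Sum.inr (Sum.inl j)) * ψv (j, k) -
        xv (Sum.inr (Sum.inl yL)) * ψv (yL, k) ∈ JB K p q r) ∧
    (∀ (j : Fin q) (k : Fin r), k ≠ z0 →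
      xv (Sum.inr (Sum.inr k)) * ψv (j, k) -
        xv (Sum.inr (Sum.inr z0)) * ψv (j, z0) ∈ JB K p q r) ∧
    (∀ (j₁ j₂ : Fin q) (k₁ k₂ : Fin r), j₁ < j₂ → k₁ < k₂ →
      ψv (j₁, k₂) * ψv (j₂, k₁) - ψv (j₁, k₁) * ψv (j₂, k₂) ∈ JB K p q r) ∧
    -- the initial ideal is generated by the corresponding quadratic monomials
    inIdeal ord (JB K p q r) =
      Ideal.span ((fun c => (monomial c (1 : K) : TB K p q r)) ''
        {c | (∃ i : Fin p,
                c = Finsupp.single (Sum.inl (Sum.inl i)) 1 +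
                    Finsupp.single (Sum.inr (Sum.inl i)) 1) ∨
             (∃ (j : Fin q) (k : Fin r), j ≠ yL ∧
                c = Finsupp.single (Sum.inl (Sum.inr (Sum.inl j))) 1 +
                    Finsupp.single (Sum.inr (Sum.inr (j, k))) 1) ∨
             (∃ (j : Fin q) (k : Fin r), k ≠ z0 ∧
                c = Finsupp.single (Sum.inl (Sum.inr (Sum.inr k))) 1 +
                    Finsupp.single (Sum.inr (Sum.inr (j, k))) 1) ∨
             (∃ (j₁ j₂ : Fin q) (k₁ k₂ : Fin r), j₁ < j₂ ∧ k₁ < k₂ ∧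
                c = Finsupp.single (Sum.inr (Sum.inr (j₁, k₂))) 1 +
                    Finsupp.single (Sum.inr (Sum.inr (j₂, k₁))) 1)}) ∧
    -- in particular, `J` satisfies the x-condition
    XCondition ord (JB K p q r) := by
  intro yL z0 xv φv ψv
  have hyL : ∀ j, j ≤ yL := fun j => Fin.le_def.mpr (by simp [yL]; omega)
  have hz0 : ∀ k, z0 ≤ k := fun k => Fin.le_def.mpr (Nat.zero_le _)
  have hin : inIdeal ord (JB K p q r) =
      Ideal.span ((fun c => monomial c (1 : K)) '' quadExps yL z0) := by
    rw [JB_eq_ker_monomialMap]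
    exact inIdeal_ker_monomialMap ord reesWeight
      (fun c hc => exists_reesExp_eq_toSyn_lt_of_mem_quadExps ord
        (fun c d h => (hord c d).2 (.inl h)) hyL hz0 hc)
      fun e e' he he' h => eq_of_reesExp_eq_of_isStandardExp_quadExps he he' h
  have hXX : ∀ u v, (X u * X v : TB K p q r) = monomial (single u 1 + single v 1) 1 :=
    fun u v => by simp [X, monomial_mul]
  refine ⟨fun i => ?_, fun j k _ => ?_, fun j k _ => ?_, fun j₁ j₂ k₁ k₂ _ _ => ?_, hin,
    quadExps yL z0, fun c hc => sum_inl_le_one_of_mem_quadExps hc, hin⟩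
  · simpa [xv, φv, ψv, hXX, X, monomial_mul, add_assoc] using
      monomial_sub_monomial_mem_JB K (by simp [reesWeight_x_add_φ i yL z0])
  · simpa [xv, ψv, hXX] using
      monomial_sub_monomial_mem_JB K (by simp [reesWeight_y_add_ψ j yL k])
  · simpa [xv, ψv, hXX] using
      monomial_sub_monomial_mem_JB K (by simp [reesWeight_z_add_ψ j k z0])
  · simpa [ψv, hXX] using
      monomial_sub_monomial_mem_JB K (by simp [reesWeight_ψ_add_ψ j₁ j₂ k₁ k₂])

end Paper
end
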